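/- arXiv:1602.06274 — 7 statements merged into one kernel-verified Lean document; each statement's English description precedes it below -/
import Mathlib

section
/- For any finite simple graph G, the expectation over all orientations σ of G (chosen uniformly at random) of the characteristic polynomial det(xI − H(G^σ)) equals the matching polynomial μ_G(x). -/
open Polynomial Matrix

/-- An orientation of a simple graph `G`: a skew-symmetric map `V × V → {0, ±1}`
that is nonzero exactly on edges. -/
def IsOrientation {V : Type} (G : SimpleGraph V) (σ : V → V → ℤ) : Prop :=
  (∀ u v, σ v u = - σ u v) ∧ (∀ u v, σ u v = 0 ∨ σ u v = 1 ∨ σ u v = -1) ∧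
  (∀ u v, σ u v ≠ 0 ↔ G.Adj u v)

/-- The Hermitian adjacency matrix of an oriented graph: `(u,v)`-entry `i · σ(u,v)`. -/
def hermAdj {V : Type} (σ : V → V → ℤ) : Matrix V V ℂ :=
  fun u v => Complex.I * (σ u v : ℂ)

/-- The `j`-matchings of `G`: sets of `j` pairwise disjoint edges. -/
def matchings {V : Type} [Fintype V] [DecidableEq V] (G : SimpleGraph V)
    [DecidableRel G.Adj] (j : ℕ) : Finset (Finset (Sym2 V)) :=
  (G.edgeFinset.powersetCard j).filter fun M =>
    ∀ e ∈ M, ∀ f ∈ M, e ≠ f → ∀ v : V, ¬(v ∈ e ∧ v ∈ f)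

/-- The matching polynomial `μ_G(x) = Σ_j (-1)^j m_j x^(n-2j)`. -/
noncomputable def matchingPoly {V : Type} [Fintype V] [DecidableEq V] (G : SimpleGraph V)
    [DecidableRel G.Adj] : Polynomial ℝ :=
  ∑ j ∈ Finset.range (Fintype.card V + 1),
    Polynomial.C ((-1 : ℝ) ^ j * ((matchings G j).card : ℝ)) *
      Polynomial.X ^ (Fintype.card V - 2 * j)

/-- The largest absolute value of a (real) root of a polynomial. -/
noncomputable def maxAbsRoot (p : Polynomial ℝ) : ℝ :=
  sSup {y : ℝ | ∃ x : ℝ, p.IsRoot x ∧ y = |x|}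

/-- The orientation determined by a choice of Boolean signs on ordered pairs. -/
def oriOfBool {V : Type} (G : SimpleGraph V) [DecidableRel G.Adj] (s : V → V → Bool) :
    V → V → ℤ :=
  fun u v => if G.Adj u v then (if s u v then 1 else -1) else 0

set_option linter.unusedSectionVars false

section Aux
variable {V : Type} [Fintype V] [DecidableEq V] (G : SimpleGraph V) [DecidableRel G.Adj]
def GoodP (π : Equiv.Perm V) : Prop := ∀ i, π i ≠ i → G.Adj (π i) i ∧ π (π i) = i
variable {G}
lemma ori_self (s : V → V → Bool) (v : V) : oriOfBool G s v v = 0 := by simp [oriOfBool]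
lemma ori_antisymm {s : V → V → Bool} (hs : ∀ u v, G.Adj u v → s v u = !(s u v))
    (u v : V) : oriOfBool G s v u = - oriOfBool G s u v := by
  by_cases h : G.Adj u v
  · simp only [oriOfBool, if_pos h, if_pos h.symm, hs u v h]
    cases s u v <;> simp
  · have h' : ¬ G.Adj v u := fun hh => h hh.symm
    simp [oriOfBool, h, h']
lemma ori_sq {s : V → V → Bool} {u v : V} (h : G.Adj u v) :
    (oriOfBool G s u v) * (oriOfBool G s u v) = 1 := by
  simp only [oriOfBool, if_pos h]; cases s u v <;> norm_num
lemma entry_eq (s : V → V → Bool) (π : Equiv.Perm V) (i : V) :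
    charmatrix (hermAdj (oriOfBool G s)) (π i) i =
      if π i = i then (X : ℂ[X])
      else - C (Complex.I * (oriOfBool G s (π i) i : ℂ)) := by
  by_cases h : π i = i
  · rw [if_pos h, h, charmatrix_apply_eq]; simp [hermAdj, ori_self]
  · rw [if_neg h, charmatrix_apply_ne _ _ _ h]; rfl

variable (G)
/-- The set of sign functions parametrizing orientations. -/
def OSet : Finset (V → V → Bool) :=
  Finset.univ.filter fun s => ∀ u v, G.Adj u v → s v u = !(s u v)
variable {G}

lemma mem_OSet {s : V → V → Bool} :
    s ∈ OSet G ↔ ∀ u v, G.Adj u v → s v u = !(s u v) := by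
  simp [OSet]

/-- Vanishing: if `π` is not a good permutation, the sum over sign functions vanishes. -/
lemma sum_prod_eq_zero {π : Equiv.Perm V} (hπ : ¬ GoodP G π) :
    ∑ s ∈ OSet G, ∏ i, charmatrix (hermAdj (oriOfBool G s)) (π i) i = 0 := by
  simp only [GoodP, not_forall] at hπ
  obtain ⟨u, hu, hbad⟩ := hπ
  by_cases hadj : G.Adj (π u) u
  · -- flip the sign on the edge (u, π u); the two halves cancel
    have hvv : π (π u) ≠ u := fun h => hbad ⟨hadj, h⟩
    set v := π u with hv
    set g : (V → V → Bool) → (V → V → Bool) := fun s a b =>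
      if (a = u ∧ b = v) ∨ (a = v ∧ b = u) then !(s a b) else s a b with hgdef
    refine Finset.sum_involution (fun s _ => g s) ?_ ?_ ?_ ?_
    · -- products cancel in pairs
      intro s hs
      have hflipentry :
          charmatrix (hermAdj (oriOfBool G (g s))) (π u) u =
            - charmatrix (hermAdj (oriOfBool G s)) (π u) u := by
        have hflip : oriOfBool G (g s) v u = - oriOfBool G s v u := by
          have hgs : g s v u = !(s v u) := by simp [hgdef]
          simp only [oriOfBool, if_pos hadj, hgs]
          cases s v u <;> norm_num
        rw [entry_eq, entry_eq, if_neg hu, if_neg hu, ← hv, hflip]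
        push_cast
        simp [mul_neg, map_neg]
      have key : ∀ i ∈ Finset.univ.erase u,
          charmatrix (hermAdj (oriOfBool G (g s))) (π i) i =
            charmatrix (hermAdj (oriOfBool G s)) (π i) i := by
        intro i hi
        have hiu : i ≠ u := (Finset.mem_erase.mp hi).1
        have hsame : oriOfBool G (g s) (π i) i = oriOfBool G s (π i) i := by
          have : g s (π i) i = s (π i) i := by
            rw [hgdef]
            dsimp only
            rw [if_neg]
            rintro (⟨h1, h2⟩ | ⟨h1, h2⟩)
            · exact hvv (h2 ▸ h1)
            · exact hiu h2
          simp [oriOfBool, this]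
        rw [entry_eq, entry_eq, hsame]
      rw [← Finset.mul_prod_erase _ _ (Finset.mem_univ u),
          ← Finset.mul_prod_erase _ _ (Finset.mem_univ u),
          Finset.prod_congr rfl key, hflipentry]
      ring
    · -- the flip has no fixed point
      intro s hs _
      intro heq
      replace heq : g s = s := heq
      have h1 : g s u v = !(s u v) := by simp [hgdef]
      rw [heq] at h1
      exact (s u v).not_ne_self h1.symm
    · -- the flip preserves the orientation set
      intro s hs
      rw [mem_OSet] at hs ⊢
      intro a b hab
      show g s b a = !(g s a b)
      by_cases hc : (a = u ∧ b = v) ∨ (a = v ∧ b = u)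
      · have hc' : (b = u ∧ a = v) ∨ (b = v ∧ a = u) := by tauto
        have e1 : g s b a = !(s b a) := by rw [hgdef]; dsimp only; rw [if_pos (by tauto)]
        have e2 : g s a b = !(s a b) := by rw [hgdef]; dsimp only; rw [if_pos (by tauto)]
        rw [e1, e2, hs a b hab]
      · have hc' : ¬ ((b = u ∧ a = v) ∨ (b = v ∧ a = u)) := by tauto
        have e1 : g s b a = s b a := by rw [hgdef]; dsimp only; rw [if_neg (by tauto)]
        have e2 : g s a b = s a b := by rw [hgdef]; dsimp only; rw [if_neg (by tauto)]
        rw [e1, e2, hs a b hab]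
    · -- the flip is an involution
      intro s hs
      funext a b
      by_cases hc : (a = u ∧ b = v) ∨ (a = v ∧ b = u) <;> simp [hgdef, hc]
  · refine Finset.sum_eq_zero fun s hs => ?_
    refine Finset.prod_eq_zero (Finset.mem_univ u) ?_
    rw [entry_eq, if_neg hu]
    have : oriOfBool G s (π u) u = 0 := by simp [oriOfBool, hadj]
    simp [this]

/-- Value: for a good permutation the product is `X ^ (n - support)` for every `s ∈ OSet`. -/
lemma prod_eq_pow {π : Equiv.Perm V} (hπ : GoodP G π) {s : V → V → Bool}
    (hs : s ∈ OSet G) :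
    ∏ i, charmatrix (hermAdj (oriOfBool G s)) (π i) i =
      (X : ℂ[X]) ^ (Fintype.card V - π.support.card) := by
  rw [mem_OSet] at hs
  rw [← Finset.prod_mul_prod_compl π.support]
  have h1 : ∏ i ∈ π.support, charmatrix (hermAdj (oriOfBool G s)) (π i) i = 1 := by
    refine Finset.prod_involution (fun a _ => π a) ?_ ?_ (fun a ha => Equiv.Perm.apply_mem_support.mpr ha) ?_
    · intro a ha
      have hne : π a ≠ a := Equiv.Perm.mem_support.mp ha
      obtain ⟨hadj, hinv⟩ := hπ a hne
      have hne2 : π (π a) ≠ π a := by rw [hinv]; exact fun h => hne h.symm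
      rw [entry_eq, entry_eq, if_neg hne, if_neg hne2, hinv,
        ori_antisymm hs (π a) a]
      rw [neg_mul_neg, ← C_mul]
      have hsq : (Complex.I * (oriOfBool G s (π a) a : ℂ)) *
          (Complex.I * ((-(oriOfBool G s (π a) a) : ℤ) : ℂ)) = 1 := by
        have : (Complex.I * (oriOfBool G s (π a) a : ℂ)) *
            (Complex.I * ((-(oriOfBool G s (π a) a) : ℤ) : ℂ)) =
            -(Complex.I * Complex.I) *
              (((oriOfBool G s (π a) a) * (oriOfBool G s (π a) a) : ℤ) : ℂ) := by
          push_cast; ring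
        rw [this, Complex.I_mul_I, ori_sq hadj]
        norm_num
      rw [hsq, Polynomial.C_1]
    · intro a ha _
      exact Equiv.Perm.mem_support.mp ha
    · intro a ha
      exact (hπ a (Equiv.Perm.mem_support.mp ha)).2
  rw [h1, one_mul]
  have h2 : ∀ i ∈ π.supportᶜ, charmatrix (hermAdj (oriOfBool G s)) (π i) i = (X : ℂ[X]) := by
    intro i hi
    have : π i = i := Equiv.Perm.notMem_support.mp (Finset.mem_compl.mp hi)
    rw [entry_eq, if_pos this]
  rw [Finset.prod_congr rfl h2, Finset.prod_const, Finset.card_compl]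

/-- Sign of a good permutation. -/
lemma good_sign {π : Equiv.Perm V} (hπ : GoodP G π) :
    ∃ k, π.support.card = 2 * k ∧ Equiv.Perm.sign π = (-1) ^ k := by
  by_cases h1 : π = 1
  · exact ⟨0, by simp [h1]⟩
  · have h2 : π ^ 2 = 1 := by
      ext i
      by_cases hi : π i = i
      · simp [pow_two, hi]
      · simp [pow_two, (hπ i hi).2]
    have horder : orderOf π = 2 := orderOf_eq_prime h2 h1
    obtain ⟨m, hm⟩ := Equiv.Perm.cycleType_prime_order (by rw [horder]; exact Nat.prime_two)
    rw [horder] at hm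
    refine ⟨m + 1, ?_, ?_⟩
    · rw [← Equiv.Perm.sum_cycleType, hm, Multiset.sum_replicate]
      simp [mul_comm]
    · rw [Equiv.Perm.sign_of_cycleType, hm]
      simp only [Multiset.sum_replicate, Multiset.card_replicate, smul_eq_mul]
      have : (m + 1) * 2 + (m + 1) = 2 * (m + 1) + (m + 1) := by ring
      rw [this, pow_add, pow_mul]
      norm_num

variable (G)
/-- All matchings (of any size). -/
def allMatch : Finset (Finset (Sym2 V)) :=
  (G.edgeFinset.powerset).filter fun M =>
    ∀ e ∈ M, ∀ f ∈ M, e ≠ f → ∀ v : V, ¬(v ∈ e ∧ v ∈ f)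

/-- The matching associated to a permutation. -/
def permMatching (π : Equiv.Perm V) : Finset (Sym2 V) :=
  π.support.image fun i => s(i, π i)

/-- The set of good permutations. -/
def goodPerms : Finset (Equiv.Perm V) :=
  Finset.univ.filter fun π => ∀ i, π i ≠ i → G.Adj (π i) i ∧ π (π i) = i

variable {G}

lemma mem_goodPerms {π : Equiv.Perm V} : π ∈ goodPerms G ↔ GoodP G π := by
  simp [goodPerms, GoodP]

lemma allMatch_unique {M : Finset (Sym2 V)} (hM : M ∈ allMatch G) {e f : Sym2 V} {v : V}
    (he : e ∈ M) (hf : f ∈ M) (hv : v ∈ e) (hv' : v ∈ f) : e = f := by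
  by_contra hne
  exact (Finset.mem_filter.mp hM).2 e he f hf hne v ⟨hv, hv'⟩

lemma allMatch_edge {M : Finset (Sym2 V)} (hM : M ∈ allMatch G) {e : Sym2 V}
    (he : e ∈ M) : e ∈ G.edgeFinset :=
  Finset.mem_powerset.mp (Finset.mem_filter.mp hM).1 he

/-- If `π` is good, any matching edge containing `v` is `s(v, π v)`. -/
lemma permMatching_edge_eq {π : Equiv.Perm V} (hπ : GoodP G π) {e : Sym2 V} {v : V}
    (he : e ∈ permMatching π) (hv : v ∈ e) : e = s(v, π v) ∧ π v ≠ v := by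
  obtain ⟨i, hi, rfl⟩ := Finset.mem_image.mp he
  have hine : π i ≠ i := Equiv.Perm.mem_support.mp hi
  rcases Sym2.mem_iff.mp hv with rfl | rfl
  · exact ⟨rfl, hine⟩
  · have h2 : π (π i) = i := (hπ i hine).2
    constructor
    · rw [h2, Sym2.eq_swap]
    · rw [h2]; exact fun h => hine h.symm

lemma permMatching_mem_allMatch {π : Equiv.Perm V} (hπ : GoodP G π) :
    permMatching π ∈ allMatch G := by
  rw [allMatch, Finset.mem_filter, Finset.mem_powerset]
  constructor
  · intro e he
    obtain ⟨i, hi, rfl⟩ := Finset.mem_image.mp he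
    have hine : π i ≠ i := Equiv.Perm.mem_support.mp hi
    rw [SimpleGraph.mem_edgeFinset, SimpleGraph.mem_edgeSet]
    exact (hπ i hine).1.symm
  · intro e he f hf hne v ⟨hv, hv'⟩
    exact hne ((permMatching_edge_eq hπ he hv).1.trans
      (permMatching_edge_eq hπ hf hv').1.symm)

lemma permMatching_card {π : Equiv.Perm V} (hπ : GoodP G π) :
    π.support.card = 2 * (permMatching π).card := by
  rw [Finset.card_eq_sum_card_image (fun i => s(i, π i)) π.support]
  rw [show (permMatching π).card = ∑ _e ∈ permMatching π, 1 from
    (Finset.card_eq_sum_ones _), Finset.mul_sum]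
  refine Finset.sum_congr rfl fun e he => ?_
  obtain ⟨i, hi, rfl⟩ := Finset.mem_image.mp he
  have hine : π i ≠ i := Equiv.Perm.mem_support.mp hi
  have hfib : π.support.filter (fun a => s(a, π a) = s(i, π i)) = {i, π i} := by
    ext a
    rw [Finset.mem_filter, Finset.mem_insert, Finset.mem_singleton]
    constructor
    · rintro ⟨ha, hae⟩
      rcases Sym2.eq_iff.mp hae with ⟨h1, _⟩ | ⟨h1, _⟩
      · exact Or.inl h1
      · exact Or.inr h1
    · rintro (rfl | rfl)
      · exact ⟨hi, rfl⟩
      · have h2 : π (π i) = i := (hπ i hine).2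
        refine ⟨Equiv.Perm.apply_mem_support.mpr hi, ?_⟩
        rw [h2, Sym2.eq_swap]
  rw [hfib, Finset.card_insert_of_notMem (by simp [Ne.symm hine]), Finset.card_singleton]
  omega

/-- The underlying function of the permutation associated to a matching. -/
noncomputable def matchPermFun (M : Finset (Sym2 V)) : V → V := fun v =>
  if h : ∃ e ∈ M, v ∈ e then Sym2.Mem.other' h.choose_spec.2 else v

lemma matchPermFun_pair {M : Finset (Sym2 V)} (hM : M ∈ allMatch G) {v : V} {e : Sym2 V}
    (he : e ∈ M) (hv : v ∈ e) : s(v, matchPermFun M v) = e := by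
  have h : ∃ e ∈ M, v ∈ e := ⟨e, he, hv⟩
  have hs1 : matchPermFun M v = Sym2.Mem.other' h.choose_spec.2 := by
    simp only [matchPermFun]
    rw [dif_pos h]
  rw [hs1, Sym2.other_spec' h.choose_spec.2]
  exact allMatch_unique hM h.choose_spec.1 he h.choose_spec.2 hv

lemma matchPermFun_not {M : Finset (Sym2 V)} {v : V} (h : ¬ ∃ e ∈ M, v ∈ e) :
    matchPermFun M v = v := by
  simp only [matchPermFun]
  rw [dif_neg h]

lemma matchPermFun_invol {M : Finset (Sym2 V)} (hM : M ∈ allMatch G) :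
    Function.Involutive (matchPermFun M) := by
  intro v
  by_cases h : ∃ e ∈ M, v ∈ e
  · obtain ⟨e, he, hv⟩ := h
    have h1 : s(v, matchPermFun M v) = e := matchPermFun_pair hM he hv
    have hw : matchPermFun M v ∈ e := by rw [← h1]; exact Sym2.mem_mk_right _ _
    have h2 : s(matchPermFun M v, matchPermFun M (matchPermFun M v)) = e :=
      matchPermFun_pair hM he hw
    rw [← h1] at h2
    rcases Sym2.eq_iff.mp h2 with ⟨h3, h4⟩ | ⟨_, h4⟩
    · rw [h4, h3]
    · exact h4
  · have h1 : matchPermFun M v = v := matchPermFun_not h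
    rw [h1, h1]

open Classical in
/-- The permutation associated to a matching. -/
noncomputable def matchPerm (M : Finset (Sym2 V)) : Equiv.Perm V :=
  if h : Function.Involutive (matchPermFun M) then Function.Involutive.toPerm _ h else 1

lemma matchPerm_apply {M : Finset (Sym2 V)} (hM : M ∈ allMatch G) (v : V) :
    matchPerm M v = matchPermFun M v := by
  rw [matchPerm, dif_pos (matchPermFun_invol hM)]
  rfl

lemma matchPerm_good {M : Finset (Sym2 V)} (hM : M ∈ allMatch G) :
    GoodP G (matchPerm M) := by
  intro v hv
  rw [matchPerm_apply hM] at hv ⊢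
  by_cases h : ∃ e ∈ M, v ∈ e
  · obtain ⟨e, he, hve⟩ := h
    have h1 : s(v, matchPermFun M v) = e := matchPermFun_pair hM he hve
    have hedge : e ∈ G.edgeFinset := allMatch_edge hM he
    rw [SimpleGraph.mem_edgeFinset] at hedge
    constructor
    · have : G.Adj v (matchPermFun M v) := by
        rw [← SimpleGraph.mem_edgeSet, h1]
        exact hedge
      exact this.symm
    · rw [matchPerm_apply hM]
      exact matchPermFun_invol hM v
  · exact absurd (matchPermFun_not h) hv

lemma matchPerm_permMatching {π : Equiv.Perm V} (hπ : GoodP G π) :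
    matchPerm (permMatching π) = π := by
  have hM := permMatching_mem_allMatch hπ
  ext v
  rw [matchPerm_apply hM]
  by_cases hv : π v = v
  · have hno : ¬ ∃ e ∈ permMatching π, v ∈ e := by
      rintro ⟨e, he, hve⟩
      exact (permMatching_edge_eq hπ he hve).2 hv
    rw [matchPermFun_not hno, hv]
  · have he : s(v, π v) ∈ permMatching π :=
      Finset.mem_image.mpr ⟨v, Equiv.Perm.mem_support.mpr hv, rfl⟩
    have h1 : s(v, matchPermFun (permMatching π) v) = s(v, π v) :=
      matchPermFun_pair hM he (Sym2.mem_mk_left _ _)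
    rcases Sym2.eq_iff.mp h1 with ⟨_, h2⟩ | ⟨h2, h3⟩
    · exact h2
    · exact absurd h2.symm hv

lemma permMatching_matchPerm {M : Finset (Sym2 V)} (hM : M ∈ allMatch G) :
    permMatching (matchPerm M) = M := by
  ext e
  constructor
  · intro he
    obtain ⟨i, hi, rfl⟩ := Finset.mem_image.mp he
    have hne : matchPerm M i ≠ i := Equiv.Perm.mem_support.mp hi
    rw [matchPerm_apply hM] at hne ⊢
    by_cases h : ∃ e' ∈ M, i ∈ e'
    · obtain ⟨e', he', hie'⟩ := h
      rw [matchPermFun_pair hM he' hie']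
      exact he'
    · exact absurd (matchPermFun_not h) hne
  · intro he
    have ha : e.out.1 ∈ e := Sym2.out_fst_mem e
    have hpair : s(e.out.1, matchPermFun M e.out.1) = e := matchPermFun_pair hM he ha
    have hne : matchPerm M e.out.1 ≠ e.out.1 := by
      rw [matchPerm_apply hM]
      intro hcon
      have hdiag : ¬ e.IsDiag := by
        have := allMatch_edge hM he
        rw [SimpleGraph.mem_edgeFinset] at this
        exact G.not_isDiag_of_mem_edgeSet this
      rw [← hpair, hcon] at hdiag
      exact hdiag (Sym2.mk_isDiag_iff.mpr rfl)
    refine Finset.mem_image.mpr ⟨e.out.1, Equiv.Perm.mem_support.mpr hne, ?_⟩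
    rw [matchPerm_apply hM, hpair]

lemma matchings_eq_filter (j : ℕ) :
    (G.edgeFinset.powersetCard j).filter (fun M =>
      ∀ e ∈ M, ∀ f ∈ M, e ≠ f → ∀ v : V, ¬(v ∈ e ∧ v ∈ f)) =
    (allMatch G).filter (fun M => M.card = j) := by
  ext M
  simp only [Finset.mem_filter, Finset.mem_powersetCard, allMatch, Finset.mem_powerset]
  tauto

lemma allMatch_card_le {M : Finset (Sym2 V)} (hM : M ∈ allMatch G) :
    2 * M.card ≤ Fintype.card V := by
  have h1 := permMatching_card (matchPerm_good hM)
  rw [permMatching_matchPerm hM] at h1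
  rw [← h1]
  exact Finset.card_le_univ _

/-- The sum over good permutations equals the sum over matchings. -/
lemma goodPerms_sum_eq :
    ∑ π ∈ goodPerms G, (Equiv.Perm.sign π) •
        ((X : ℂ[X]) ^ (Fintype.card V - π.support.card)) =
      ∑ M ∈ allMatch G, ((-1 : ℂ[X]) ^ M.card *
        (X : ℂ[X]) ^ (Fintype.card V - 2 * M.card)) := by
  refine Finset.sum_nbij' permMatching matchPerm ?_ ?_ ?_ ?_ ?_
  · intro π hπ
    exact permMatching_mem_allMatch (mem_goodPerms.mp hπ)
  · intro M hM
    exact mem_goodPerms.mpr (matchPerm_good hM)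
  · intro π hπ
    exact matchPerm_permMatching (mem_goodPerms.mp hπ)
  · intro M hM
    exact permMatching_matchPerm hM
  · intro π hπ
    have hgood := mem_goodPerms.mp hπ
    obtain ⟨k, hk, hsign⟩ := good_sign hgood
    have hcard : (permMatching π).card = k := by
      have := permMatching_card hgood
      omega
    rw [hsign, hcard, ← hk]
    rw [Units.smul_def]
    rw [zsmul_eq_mul]
    push_cast
    ring

end Aux

open Finset in
theorem average_charpoly_eq_matchingPoly'
    {V : Type} [Fintype V] [DecidableEq V] (G : SimpleGraph V) [DecidableRel G.Adj] :
    ((((OSet G).card : ℂ))⁻¹ • ∑ s ∈ OSet G, (hermAdj (oriOfBool G s)).charpoly) =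
      ∑ j ∈ Finset.range (Fintype.card V + 1),
        Polynomial.C ((-1 : ℂ) ^ j *
          ((((G.edgeFinset.powersetCard j).filter (fun M =>
            ∀ e ∈ M, ∀ f ∈ M, e ≠ f → ∀ v : V, ¬(v ∈ e ∧ v ∈ f))).card : ℂ))) *
          (X : ℂ[X]) ^ (Fintype.card V - 2 * j) := by
  classical
  -- nonemptiness of OSet
  have hne : (OSet G).Nonempty := by
    refine ⟨fun u v => decide ((Fintype.equivFin V u : ℕ) < (Fintype.equivFin V v : ℕ)), ?_⟩
    rw [mem_OSet]
    intro u v huv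
    have hne' : (Fintype.equivFin V u : ℕ) ≠ (Fintype.equivFin V v : ℕ) := by
      intro h
      exact G.ne_of_adj huv (by
        have := Fin.val_injective h
        exact (Fintype.equivFin V).injective this)
    by_cases h : (Fintype.equivFin V u : ℕ) < (Fintype.equivFin V v : ℕ)
    · simp [h, Nat.lt_asymm h]
    · have h2 : (Fintype.equivFin V v : ℕ) < (Fintype.equivFin V u : ℕ) :=
        lt_of_le_of_ne (Nat.le_of_not_lt h) (Ne.symm hne')
      simp [h, h2, Nat.lt_asymm h2]
  have hcard : ((OSet G).card : ℂ) ≠ 0 := by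
    exact_mod_cast Nat.cast_ne_zero.mpr (Finset.card_ne_zero_of_mem hne.choose_spec)
  -- expand the characteristic polynomials
  have hexp : ∑ s ∈ OSet G, (hermAdj (oriOfBool G s)).charpoly =
      ((OSet G).card : ℂ) • ∑ M ∈ allMatch G, ((-1 : ℂ[X]) ^ M.card *
        (X : ℂ[X]) ^ (Fintype.card V - 2 * M.card)) := by
    have h1 : ∀ s ∈ OSet G, (hermAdj (oriOfBool G s)).charpoly =
        ∑ π : Equiv.Perm V, Equiv.Perm.sign π •
          ∏ i, charmatrix (hermAdj (oriOfBool G s)) (π i) i := by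
      intro s _
      rw [Matrix.charpoly, Matrix.det_apply]
    rw [Finset.sum_congr rfl h1, Finset.sum_comm]
    have h2 : ∀ π : Equiv.Perm V,
        ∑ s ∈ OSet G, Equiv.Perm.sign π •
          ∏ i, charmatrix (hermAdj (oriOfBool G s)) (π i) i =
        if GoodP G π then
          ((OSet G).card : ℂ) • (Equiv.Perm.sign π •
            ((X : ℂ[X]) ^ (Fintype.card V - π.support.card)))
        else 0 := by
      intro π
      by_cases hπ : GoodP G π
      · rw [if_pos hπ]
        rw [Finset.sum_congr rfl (fun s hs => by rw [prod_eq_pow hπ hs])]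
        rw [Finset.sum_const, ← Nat.cast_smul_eq_nsmul ℂ]
      · rw [if_neg hπ, ← Finset.smul_sum, sum_prod_eq_zero hπ, smul_zero]
    rw [Finset.sum_congr rfl (fun π _ => h2 π)]
    rw [Finset.sum_ite, Finset.sum_const_zero, add_zero]
    rw [← Finset.smul_sum]
    congr 1
    have : Finset.univ.filter (fun π => GoodP G π) = goodPerms G := by
      ext π
      rw [goodPerms, Finset.mem_filter, Finset.mem_filter]
      simp [GoodP]
    rw [this, goodPerms_sum_eq]
  rw [hexp, smul_smul, inv_mul_cancel₀ hcard, one_smul]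
  -- regroup by size
  have hmaps : ∀ M ∈ allMatch G, M.card ∈ Finset.range (Fintype.card V + 1) := by
    intro M hM
    rw [Finset.mem_range]
    have := allMatch_card_le hM
    omega
  rw [← Finset.sum_fiberwise_of_maps_to hmaps]
  refine Finset.sum_congr rfl fun j hj => ?_
  rw [show ((allMatch G).filter fun M => M.card = j) =
    (G.edgeFinset.powersetCard j).filter (fun M =>
      ∀ e ∈ M, ∀ f ∈ M, e ≠ f → ∀ v : V, ¬(v ∈ e ∧ v ∈ f)) from (matchings_eq_filter j).symm]
  have hconst : ∀ M ∈ (G.edgeFinset.powersetCard j).filter (fun M =>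
      ∀ e ∈ M, ∀ f ∈ M, e ≠ f → ∀ v : V, ¬(v ∈ e ∧ v ∈ f)),
      ((-1 : ℂ[X]) ^ M.card * (X : ℂ[X]) ^ (Fintype.card V - 2 * M.card)) =
      ((-1 : ℂ[X]) ^ j * (X : ℂ[X]) ^ (Fintype.card V - 2 * j)) := by
    intro M hM
    have hc : M.card = j := (Finset.mem_powersetCard.mp (Finset.mem_filter.mp hM).1).2
    rw [hc]
  rw [Finset.sum_congr rfl hconst, Finset.sum_const, ← Nat.cast_smul_eq_nsmul ℂ,
    smul_eq_C_mul, Polynomial.C_mul]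
  rw [show Polynomial.C ((-1:ℂ)^j) = ((-1 : ℂ[X]))^j by rw [map_pow, map_neg, Polynomial.C_1]]
  ring



/-- The expectation, over a uniformly random orientation of `G`, of the characteristic
polynomial `det(xI − H(G^σ))` equals the matching polynomial of `G`.  Orientations are
parametrized by sign functions `s` that are antisymmetric on edges; each orientation arises
from the same number of such sign functions, so averaging over them is averaging over the
`2^{|E|}` orientations. -/
theorem average_charpoly_eq_matchingPoly
    {V : Type} [Fintype V] [DecidableEq V] (G : SimpleGraph V) [DecidableRel G.Adj] :
    let O : Finset (V → V → Bool) :=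
      Finset.univ.filter fun s => ∀ u v, G.Adj u v → s v u = !(s u v)
    ((O.card : ℂ)⁻¹ • ∑ s ∈ O, (hermAdj (oriOfBool G s)).charpoly) =
      (matchingPoly G).map (algebraMap ℝ ℂ) := by
  intro O
  have hO : O = OSet G := rfl
  rw [hO, average_charpoly_eq_matchingPoly']
  rw [matchingPoly, Polynomial.map_sum]
  refine Finset.sum_congr rfl fun j _ => ?_
  rw [Polynomial.map_mul, Polynomial.map_pow, Polynomial.map_X, Polynomial.map_C]
  rw [show (matchings G j) = (G.edgeFinset.powersetCard j).filter (fun M =>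
      ∀ e ∈ M, ∀ f ∈ M, e ≠ f → ∀ v : V, ¬(v ∈ e ∧ v ∈ f)) from rfl]
  congr 1
  congr 1
  push_cast
  simp
end

section
/- If G is a finite tree, then for any orientation σ of G, the Hermitian adjacency matrix H(G^σ) is cospectral with the (ordinary) adjacency matrix of G, i.e., det(xI − H(G^σ)) = det(xI − A(G)). -/
open Polynomial Matrix

noncomputable def phi {V : Type} (σ : V → V → ℤ) {G : SimpleGraph V} :
    {u v : V} → G.Walk u v → ℂ
  | _, _, .nil => 1
  | u, _, .cons (v := w) _ p => (-Complex.I * (σ u w : ℂ)) * phi σ p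

@[simp] lemma phi_nil {V : Type} (σ : V → V → ℤ) {G : SimpleGraph V} {u : V} :
    phi σ (SimpleGraph.Walk.nil : G.Walk u u) = 1 := rfl

@[simp] lemma phi_cons {V : Type} (σ : V → V → ℤ) {G : SimpleGraph V} {u w v : V}
    (h : G.Adj u w) (p : G.Walk w v) :
    phi σ (SimpleGraph.Walk.cons h p) = (-Complex.I * (σ u w : ℂ)) * phi σ p := rfl

lemma phi_append {V : Type} (σ : V → V → ℤ) {G : SimpleGraph V} {u v w : V}
    (p : G.Walk u v) (q : G.Walk v w) :
    phi σ (p.append q) = phi σ p * phi σ q := by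
  induction p with
  | nil => simp
  | cons h p ih => simp [ih, mul_assoc]

lemma phi_ne_zero {V : Type} {σ : V → V → ℤ} {G : SimpleGraph V}
    (hσ : IsOrientation G σ) {u v : V} (p : G.Walk u v) : phi σ p ≠ 0 := by
  induction p with
  | nil => simp
  | cons h p ih =>
    simp only [phi_cons]
    refine mul_ne_zero (mul_ne_zero (by simp [Complex.I_ne_zero]) ?_) ih
    exact_mod_cast Int.cast_ne_zero.mpr ((hσ.2.2 _ _).mpr h)

lemma charpoly_conj_eq {n : Type} [Fintype n] [DecidableEq n] {R : Type*} [CommRing R]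
    (D E M : Matrix n n R) (hDE : D * E = 1) :
    (D * M * E).charpoly = M.charpoly := by
  have hmapDE : (D.map (C : R → R[X])) * (E.map C) = 1 := by
    rw [← Matrix.map_mul]
    rw [hDE]
    exact Matrix.map_one _ (map_zero C) (map_one C)
  have hch : charmatrix (D * M * E) =
      (D.map (C : R → R[X])) * charmatrix M * (E.map C) := by
    unfold charmatrix
    rw [Matrix.mul_sub, Matrix.sub_mul]
    congr 1
    · have heq := (Matrix.scalar_commute (X : R[X]) (fun r' => Commute.all _ _)
        (D.map (C : R → R[X]))).eq
      rw [← heq, mul_assoc, hmapDE, mul_one]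
    · simp [RingHom.mapMatrix_apply, Matrix.map_mul, mul_assoc]
  unfold Matrix.charpoly
  rw [hch, Matrix.det_mul, Matrix.det_mul]
  have : (D.map (C : R → R[X])).det * (E.map C).det = 1 := by
    rw [← Matrix.det_mul, hmapDE, Matrix.det_one]
  calc (D.map (C : R → R[X])).det * (charmatrix M).det * (E.map C).det
      = (charmatrix M).det * ((D.map (C : R → R[X])).det * (E.map C).det) := by ring
    _ = (charmatrix M).det := by rw [this, mul_one]

/-- If `G` is a finite tree, then for any orientation `σ`, the Hermitian adjacency matrix
`H(G^σ)` is cospectral with the ordinary adjacency matrix of `G`: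
`det(xI − H(G^σ)) = det(xI − A(G))`. -/
theorem tree_hermAdj_cospectral_adjMatrix
    {V : Type} [Fintype V] [DecidableEq V] (G : SimpleGraph V) [DecidableRel G.Adj]
    (hconn : G.Connected) (hacyc : G.IsAcyclic)
    (σ : V → V → ℤ) (hσ : IsOrientation G σ) :
    (hermAdj σ).charpoly = (G.adjMatrix ℂ).charpoly := by
  classical
  rcases isEmpty_or_nonempty V with hV | hV
  · have : hermAdj σ = G.adjMatrix ℂ := by
      ext u v; exact isEmptyElim u
    rw [this]
  · have ht : G.IsTree := ⟨hconn, hacyc⟩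
    obtain ⟨r⟩ := hV
    have hskew := hσ.1
    have hne := hσ.2.2
    -- σ squares to 1 on edges
    have fact1 : ∀ {u w : V}, G.Adj u w → ((σ u w : ℂ)) * ((σ u w : ℂ)) = 1 := by
      intro u w h
      rcases hσ.2.1 u w with h0 | h1 | h1
      · exact absurd h0 ((hne u w).mpr h)
      · rw [h1]; norm_num
      · rw [h1]; norm_num
    have fact2 : ∀ {u w : V}, G.Adj u w →
        (-Complex.I * (σ u w : ℂ)) * (-Complex.I * (σ w u : ℂ)) = 1 := by
      intro u w h
      have ha := fact1 h
      have hI := Complex.I_mul_I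
      have hs : ((σ w u : ℂ)) = -((σ u w : ℂ)) := by rw [hskew u w]; push_cast; ring
      rw [hs]
      linear_combination (-(((σ u w : ℂ)) * ((σ u w : ℂ)))) * hI + ha
    -- the unique path from the root and the scaling function d
    let P : ∀ v : V, G.Walk r v := fun v => (ht.existsUnique_path r v).choose
    have hP : ∀ v, (P v).IsPath := fun v => (ht.existsUnique_path r v).choose_spec.1
    let d : V → ℂ := fun v => phi σ (P v)
    have hd0 : ∀ v, d v ≠ 0 := fun v => phi_ne_zero hσ (P v)
    have step : ∀ u w, G.Adj u w → d w = d u * (-Complex.I * (σ u w : ℂ)) := by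
      intro u w h
      by_cases hw : w ∈ (P u).support
      · -- P u passes through w; its tail from w is the single edge w-u
        have hedge : (SimpleGraph.Walk.cons h.symm SimpleGraph.Walk.nil : G.Walk w u).IsPath := by
          simp [SimpleGraph.Walk.cons_isPath_iff, h.ne']
        have hdrop : (P u).dropUntil w hw =
            SimpleGraph.Walk.cons h.symm SimpleGraph.Walk.nil :=
          (ht.existsUnique_path w u).unique ((hP u).dropUntil hw) hedge
        have htake : (P u).takeUntil w hw = P w :=
          (ht.existsUnique_path r w).unique ((hP u).takeUntil hw) (hP w)
        have hspec := SimpleGraph.Walk.take_spec (P u) hw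
        have hu : d u = d w * (-Complex.I * (σ w u : ℂ)) := by
          show phi σ (P u) = _
          rw [← hspec, phi_append, htake, hdrop, phi_cons, phi_nil, mul_one]
        rw [hu, mul_assoc, fact2 h.symm, mul_one]
      · -- w is not on P u: extend P u by the edge u-w
        have hpath : ((P u).concat h).IsPath := by
          rw [← SimpleGraph.Walk.isPath_reverse_iff, SimpleGraph.Walk.reverse_concat]
          rw [SimpleGraph.Walk.cons_isPath_iff]
          refine ⟨(SimpleGraph.Walk.isPath_reverse_iff _).mpr (hP u), ?_⟩
          rwa [SimpleGraph.Walk.support_reverse, List.mem_reverse]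
        have hPw : P w = (P u).concat h :=
          (ht.existsUnique_path r w).unique (hP w) hpath
        show phi σ (P w) = _
        rw [hPw, SimpleGraph.Walk.concat_eq_append, phi_append, phi_cons, phi_nil, mul_one]
    -- conjugation by the diagonal matrix of d
    let D : Matrix V V ℂ := Matrix.diagonal d
    let E : Matrix V V ℂ := Matrix.diagonal fun v => (d v)⁻¹
    have hDE : D * E = 1 := by
      show Matrix.diagonal d * Matrix.diagonal _ = 1
      rw [Matrix.diagonal_mul_diagonal]
      rw [show (fun v => d v * (d v)⁻¹) = fun _ => (1 : ℂ) from
        funext fun v => mul_inv_cancel₀ (hd0 v)]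
      exact Matrix.diagonal_one
    have hHD : hermAdj σ * D = D * G.adjMatrix ℂ := by
      ext u v
      show (hermAdj σ * Matrix.diagonal d) u v = (Matrix.diagonal d * G.adjMatrix ℂ) u v
      rw [Matrix.mul_diagonal, Matrix.diagonal_mul]
      by_cases hadj : G.Adj u v
      · rw [step u v hadj]
        simp only [hermAdj, SimpleGraph.adjMatrix_apply, if_pos hadj, mul_one]
        have ha := fact1 hadj
        have hI := Complex.I_mul_I
        linear_combination (-(((σ u v : ℂ)) * ((σ u v : ℂ))) * d u) * hI + d u * ha
      · have h0 : σ u v = 0 := by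
          by_contra h0; exact hadj ((hne u v).mp h0)
        simp [hermAdj, h0, hadj]
    have hconj : hermAdj σ = D * G.adjMatrix ℂ * E := by
      calc hermAdj σ = hermAdj σ * (D * E) := by rw [hDE, mul_one]
        _ = hermAdj σ * D * E := by rw [mul_assoc]
        _ = D * G.adjMatrix ℂ * E := by rw [hHD]
    rw [hconj, charpoly_conj_eq _ _ _ hDE]
end

section
/- Let {f_{s_1,...,s_m}} be an interlacing family of real-rooted degree-n polynomials with positive leading coefficients indexed by S_1 × ⋯ × S_m. Then there exists an assignment (s_1,...,s_m) ∈ S_1 × ⋯ × S_m such that the largest root of f_{s_1,...,s_m} is at least the largest root of the sum f_∅ = Σ_{(s_1,...,s_m)} f_{s_1,...,s_m}. -/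
open Polynomial

/-- A polynomial is real-rooted if all its roots are real (counted with multiplicity,
its real roots account for its full degree). -/
def RealRooted (f : Polynomial ℝ) : Prop := f.roots.card = f.natDegree

/-- `g` interlaces `f`: the roots of `g` and `f` can be listed in nondecreasing order as
`α_1, ..., α_n` and `β_1, ..., β_{n+1}` with `β_1 ≤ α_1 ≤ β_2 ≤ ⋯ ≤ α_n ≤ β_{n+1}`. -/
def Interlaces (g f : Polynomial ℝ) : Prop :=
  ∃ (n : ℕ) (α : Fin n → ℝ) (β : Fin (n + 1) → ℝ), Monotone α ∧ Monotone β ∧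
    g.roots = Finset.univ.val.map α ∧ f.roots = Finset.univ.val.map β ∧
    ∀ i : Fin n, β i.castSucc ≤ α i ∧ α i ≤ β i.succ

/-- The largest (real) root of a polynomial. -/
noncomputable def largestRoot (p : Polynomial ℝ) : ℝ := sSup {x : ℝ | p.IsRoot x}

/-- The partial sum `f_{s_1,...,s_k}` of an indexed family: the sum of `f t` over all
valid tuples `t` agreeing with `s` on the first `k` coordinates. -/
noncomputable def psum {ι : Type} [Fintype ι] [DecidableEq ι] {m : ℕ} (S : Fin m → Finset ι)
    (f : (Fin m → ι) → Polynomial ℝ) (k : ℕ) (s : Fin m → ι) : Polynomial ℝ :=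
  ∑ t ∈ Finset.univ.filter (fun t : Fin m → ι =>
      (∀ i, t i ∈ S i) ∧ ∀ i : Fin m, (i : ℕ) < k → t i = s i), f t

/-- The family `{f_{s_1,...,s_m}}` is an interlacing family: for every partial assignment
`(s_1,...,s_k)` the one-step extensions `{f_{s_1,...,s_k,t}}_{t ∈ S_{k+1}}` have a common
interlacing. -/
def IsInterlacingFamily {ι : Type} [Fintype ι] [DecidableEq ι] {m : ℕ} (S : Fin m → Finset ι)
    (f : (Fin m → ι) → Polynomial ℝ) : Prop :=
  ∀ (k : ℕ) (hk : k < m) (s : Fin m → ι), (∀ i : Fin m, (i : ℕ) < k → s i ∈ S i) →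
    ∃ g, ∀ t ∈ S ⟨k, hk⟩, Interlaces g (psum S f (k + 1) (Function.update s ⟨k, hk⟩ t))



/-- A polynomial with positive leading coefficient and no real roots is everywhere positive. -/
lemma eval_pos_of_roots_zero {q : Polynomial ℝ} (hlc : 0 < q.leadingCoeff)
    (hr : q.roots = 0) (x : ℝ) : 0 < q.eval x := by
  have hq0 : q ≠ 0 := fun h => by simp [h] at hlc
  rcases Nat.eq_zero_or_pos q.natDegree with h0 | hpos
  · have hC : q = C (q.coeff 0) := q.eq_C_of_natDegree_eq_zero h0
    have : q.leadingCoeff = q.coeff 0 := by rw [leadingCoeff, h0]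
    rw [hC, eval_C]
    linarith [this ▸ hlc]
  · have hdeg : 0 < q.degree := natDegree_pos_iff_degree_pos.mp hpos
    have htt := q.tendsto_atTop_of_leadingCoeff_nonneg hdeg hlc.le
    by_contra hx
    push_neg at hx
    obtain ⟨y, hy1, hy2⟩ :=
      ((htt.eventually_gt_atTop 0).and (Filter.eventually_ge_atTop x)).exists
    obtain ⟨z, _, hz0⟩ := intermediate_value_Icc hy2 (q.continuous.continuousOn)
      (Set.mem_Icc.mpr ⟨hx, hy1.le⟩)
    have : z ∈ q.roots := mem_roots'.mpr ⟨hq0, hz0⟩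
    rw [hr] at this
    exact Multiset.notMem_zero z this

lemma interlace_bundle {g F : Polynomial ℝ} (hlc : 0 < F.leadingCoeff)
    (h : Interlaces g F) :
    F.IsRoot (largestRoot F) ∧
    (∀ x, largestRoot F < x → 0 < F.eval x) ∧
    (∀ x, x ≤ largestRoot F → (∀ r ∈ g.roots, r ≤ x) → F.eval x ≤ 0) ∧
    (∀ r ∈ g.roots, r ≤ largestRoot F) := by
  obtain ⟨n, α, β, hmα, hmβ, hgr, hFr, hsw⟩ := h
  have hF0 : F ≠ 0 := fun h => by simp [h] at hlc
  set L := β (Fin.last n) with hL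
  have hmax : ∀ r ∈ F.roots, r ≤ L := by
    rw [hFr]
    intro r hr
    obtain ⟨j, _, rfl⟩ := Multiset.mem_map.mp hr
    exact hmβ (Fin.le_last j)
  have hLmem : L ∈ F.roots := by
    rw [hFr]
    exact Multiset.mem_map.mpr ⟨Fin.last n, Finset.mem_val.mpr (Finset.mem_univ _), rfl⟩
  have hLroot : F.IsRoot L := (mem_roots'.mp hLmem).2
  have hbdd : ∀ x ∈ {x : ℝ | F.IsRoot x}, x ≤ L :=
    fun x hx => hmax x (mem_roots'.mpr ⟨hF0, hx⟩)
  have hLR : largestRoot F = L := by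
    apply le_antisymm
    · exact csSup_le ⟨L, hLroot⟩ hbdd
    · exact le_csSup ⟨L, hbdd⟩ hLroot
  -- factorization F = P * q
  obtain ⟨q, hq⟩ := F.prod_multiset_X_sub_C_dvd
  set P : Polynomial ℝ := (F.roots.map fun r => X - C r).prod with hP
  have hPm : P.Monic := monic_multiset_prod_of_monic _ _ (fun r _ => monic_X_sub_C r)
  have hPr : P.roots = F.roots := roots_multiset_prod_X_sub_C F.roots
  have hlcq : 0 < q.leadingCoeff := by
    have h1 : F.leadingCoeff = P.leadingCoeff * q.leadingCoeff := by
      rw [hq, leadingCoeff_mul]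
    rw [hPm.leadingCoeff, one_mul] at h1
    rwa [h1] at hlc
  have hq0 : q ≠ 0 := fun h => by simp [h] at hlcq
  have hP0 : P ≠ 0 := hPm.ne_zero
  have hrq : q.roots = 0 := by
    have h1 : F.roots = P.roots + q.roots := by
      rw [hq]; exact roots_mul (hq ▸ hF0)
    rw [hPr] at h1
    exact (left_eq_add.mp h1)
  have hqpos : ∀ x, 0 < q.eval x := eval_pos_of_roots_zero hlcq hrq
  have heval : ∀ x, F.eval x = (∏ j : Fin (n+1), (x - β j)) * q.eval x := by
    intro x
    rw [hq, eval_mul]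
    congr 1
    rw [hP, eval_multiset_prod, hFr, Multiset.map_map, Multiset.map_map]
    rw [Finset.prod_eq_multiset_prod]
    congr 1
    apply Multiset.map_congr rfl
    intro j _
    simp
  refine ⟨hLR ▸ hLroot, ?_, ?_, ?_⟩
  · intro x hx
    rw [hLR] at hx
    rw [heval x]
    apply mul_pos _ (hqpos x)
    apply Finset.prod_pos
    intro j _
    have : β j ≤ L := hmβ (Fin.le_last j)
    linarith
  · intro x hx hgx
    rw [hLR] at hx
    rw [heval x]
    have hprod : (∏ j : Fin (n+1), (x - β j)) ≤ 0 := by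
      rw [Fin.prod_univ_castSucc]
      have h1 : (0:ℝ) ≤ ∏ j : Fin n, (x - β j.castSucc) := by
        apply Finset.prod_nonneg
        intro j _
        have hαj : α j ∈ g.roots := by
          rw [hgr]
          exact Multiset.mem_map.mpr ⟨j, Finset.mem_val.mpr (Finset.mem_univ _), rfl⟩
        have : β j.castSucc ≤ α j := (hsw j).1
        have := hgx (α j) hαj
        linarith
      have h2 : x - β (Fin.last n) ≤ 0 := by rw [← hL]; linarith
      exact mul_nonpos_of_nonneg_of_nonpos h1 h2
    exact mul_nonpos_of_nonpos_of_nonneg hprod (hqpos x).le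
  · intro r hr
    rw [hgr] at hr
    obtain ⟨j, _, rfl⟩ := Multiset.mem_map.mp hr
    rw [hLR]
    calc α j ≤ β j.succ := (hsw j).2
      _ ≤ L := hmβ (Fin.le_last _)

lemma key_step {ι : Type} (S : Finset ι) (hS : S.Nonempty) (F : ι → Polynomial ℝ)
    (hlc : ∀ t ∈ S, 0 < (F t).leadingCoeff)
    (g : Polynomial ℝ) (hg : ∀ t ∈ S, Interlaces g (F t)) :
    ∃ t ∈ S, largestRoot (∑ u ∈ S, F u) ≤ largestRoot (F t) := by
  have H := fun t (ht : t ∈ S) => interlace_bundle (hlc t ht) (hg t ht)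
  obtain ⟨t₀, ht₀, hmin⟩ := S.exists_min_image (fun t => largestRoot (F t)) hS
  obtain ⟨t₁, ht₁, hmax⟩ := S.exists_max_image (fun t => largestRoot (F t)) hS
  refine ⟨t₁, ht₁, ?_⟩
  have hgle : ∀ r ∈ g.roots, r ≤ largestRoot (F t₀) := (H t₀ ht₀).2.2.2
  have hneg : (∑ u ∈ S, F u).eval (largestRoot (F t₀)) ≤ 0 := by
    rw [eval_finset_sum]
    exact Finset.sum_nonpos fun t ht => (H t ht).2.2.1 _ (hmin t ht) hgle
  have hpos : ∀ x, largestRoot (F t₁) < x → 0 < (∑ u ∈ S, F u).eval x := by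
    intro x hx
    rw [eval_finset_sum]
    exact Finset.sum_pos (fun t ht => (H t ht).2.1 x (lt_of_le_of_lt (hmax t ht) hx)) hS
  have h01 : largestRoot (F t₀) ≤ largestRoot (F t₁) := hmax t₀ ht₀
  have hy : 0 < (∑ u ∈ S, F u).eval (largestRoot (F t₁) + 1) := hpos _ (by linarith)
  obtain ⟨z, _, hz0⟩ := intermediate_value_Icc (by linarith : largestRoot (F t₀) ≤ largestRoot (F t₁) + 1)
      ((∑ u ∈ S, F u).continuous.continuousOn) (Set.mem_Icc.mpr ⟨hneg, hy.le⟩)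
  have hub : ∀ x ∈ {x : ℝ | (∑ u ∈ S, F u).IsRoot x}, x ≤ largestRoot (F t₁) := by
    intro x hx
    by_contra hgt
    push_neg at hgt
    exact (hpos x hgt).ne' hx
  exact csSup_le ⟨z, hz0⟩ hub


lemma psum_zero_indep {ι : Type} [Fintype ι] [DecidableEq ι] {m : ℕ} (S : Fin m → Finset ι)
    (f : (Fin m → ι) → Polynomial ℝ) (s s' : Fin m → ι) :
    psum S f 0 s = psum S f 0 s' := by
  unfold psum
  congr 1
  apply Finset.filter_congr
  intro t _
  simp

lemma psum_last {ι : Type} [Fintype ι] [DecidableEq ι] {m : ℕ} (S : Fin m → Finset ι)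
    (f : (Fin m → ι) → Polynomial ℝ) (s : Fin m → ι) (hs : ∀ i, s i ∈ S i) :
    psum S f m s = f s := by
  unfold psum
  have : (Finset.univ.filter (fun t : Fin m → ι =>
      (∀ i, t i ∈ S i) ∧ ∀ i : Fin m, (i : ℕ) < m → t i = s i)) = {s} := by
    ext u
    simp only [Finset.mem_filter, Finset.mem_univ, true_and, Finset.mem_singleton]
    constructor
    · rintro ⟨_, h2⟩
      exact funext fun i => h2 i i.isLt
    · rintro rfl
      exact ⟨hs, fun _ _ => rfl⟩
  rw [this, Finset.sum_singleton]

lemma psum_split {ι : Type} [Fintype ι] [DecidableEq ι] {m : ℕ} (S : Fin m → Finset ι)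
    (f : (Fin m → ι) → Polynomial ℝ) {k : ℕ} (hk : k < m) (s : Fin m → ι) :
    ∑ t ∈ S ⟨k, hk⟩, psum S f (k + 1) (Function.update s ⟨k, hk⟩ t) = psum S f k s := by
  conv_rhs => rw [psum]
  rw [← Finset.sum_fiberwise_of_maps_to
    (fun u hu => ((Finset.mem_filter.mp hu).2.1 ⟨k, hk⟩)) f]
  apply Finset.sum_congr rfl
  intro t _
  rw [psum, Finset.filter_filter]
  apply Finset.sum_congr _ (fun _ _ => rfl)
  apply Finset.filter_congr
  intro u _
  constructor
  · rintro ⟨h1, h2⟩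
    have h3 : u ⟨k, hk⟩ = t := by
      have := h2 ⟨k, hk⟩ (Nat.lt_succ_self k)
      rwa [Function.update_self] at this
    refine ⟨⟨h1, fun i hi => ?_⟩, h3⟩
    have hik : i ≠ (⟨k, hk⟩ : Fin m) := by
      intro he
      rw [he] at hi
      exact absurd hi (lt_irrefl k)
    have := h2 i (Nat.lt_succ_of_lt hi)
    rwa [Function.update_apply, if_neg hik] at this
  · rintro ⟨⟨h1, h2⟩, h3⟩
    refine ⟨h1, fun i hi => ?_⟩
    rcases Nat.lt_succ_iff_lt_or_eq.mp hi with h | h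
    · rw [Function.update_apply, if_neg (fun he => by rw [he] at h; exact absurd h (lt_irrefl k))]
      exact h2 i h
    · have hik : i = (⟨k, hk⟩ : Fin m) := Fin.ext h
      rw [hik, Function.update_self]
      exact h3

lemma psum_deg_lc {ι : Type} [Fintype ι] [DecidableEq ι] {m n : ℕ} (S : Fin m → Finset ι)
    (hS : ∀ i, (S i).Nonempty)
    (f : (Fin m → ι) → Polynomial ℝ)
    (hf : ∀ s : Fin m → ι, (∀ i, s i ∈ S i) → (f s).natDegree = n ∧ 0 < (f s).leadingCoeff)
    {k : ℕ} (s : Fin m → ι) (hs : ∀ i : Fin m, (i : ℕ) < k → s i ∈ S i) :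
    (psum S f k s).natDegree = n ∧ 0 < (psum S f k s).leadingCoeff := by
  classical
  set A := Finset.univ.filter (fun t : Fin m → ι =>
      (∀ i, t i ∈ S i) ∧ ∀ i : Fin m, (i : ℕ) < k → t i = s i) with hA
  have hAne : A.Nonempty := by
    refine ⟨fun i => if h : (i : ℕ) < k then s i else (hS i).choose, ?_⟩
    rw [hA, Finset.mem_filter]
    refine ⟨Finset.mem_univ _, fun i => ?_, fun i hi => by simp [hi]⟩
    by_cases h : (i : ℕ) < k
    · simpa [h] using hs i h
    · simpa [h] using (hS i).choose_spec
  have hmem : ∀ u ∈ A, (f u).natDegree = n ∧ 0 < (f u).leadingCoeff := by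
    intro u hu
    exact hf u (Finset.mem_filter.mp hu).2.1
  have hcoeff : 0 < (psum S f k s).coeff n := by
    rw [psum, ← hA, finset_sum_coeff]
    apply Finset.sum_pos _ hAne
    intro u hu
    have := hmem u hu
    rw [← this.1] at *
    rw [← leadingCoeff]
    exact this.2
  have hdle : (psum S f k s).natDegree ≤ n := by
    rw [psum, ← hA]
    exact natDegree_sum_le_of_forall_le A f (fun u hu => le_of_eq (hmem u hu).1)
  have hdge : n ≤ (psum S f k s).natDegree := le_natDegree_of_ne_zero hcoeff.ne'
  have hdeq : (psum S f k s).natDegree = n := le_antisymm hdle hdge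
  refine ⟨hdeq, ?_⟩
  rw [leadingCoeff, hdeq]
  exact hcoeff


/-- For an interlacing family of real-rooted degree-`n` polynomials with positive leading
coefficients, some member has its largest root at least the largest root of the total sum
`f_∅`. -/
theorem interlacingFamily_exists_largestRoot_ge
    {ι : Type} [Fintype ι] [DecidableEq ι] {m n : ℕ} (S : Fin m → Finset ι)
    (hS : ∀ i, (S i).Nonempty)
    (f : (Fin m → ι) → Polynomial ℝ)
    (hf : ∀ s : Fin m → ι, (∀ i, s i ∈ S i) →
      RealRooted (f s) ∧ (f s).natDegree = n ∧ 0 < (f s).leadingCoeff)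
    (hfam : IsInterlacingFamily S f) :
    ∃ s : Fin m → ι, (∀ i, s i ∈ S i) ∧
      largestRoot (psum S f 0 s) ≤ largestRoot (f s) := by
  classical
  have hf' : ∀ s : Fin m → ι, (∀ i, s i ∈ S i) →
      (f s).natDegree = n ∧ 0 < (f s).leadingCoeff := fun s hs => (hf s hs).2
  set s₀ : Fin m → ι := fun i => (hS i).choose with hs₀
  have main : ∀ k, k ≤ m → ∃ s : Fin m → ι, (∀ i : Fin m, (i : ℕ) < k → s i ∈ S i) ∧
      largestRoot (psum S f 0 s₀) ≤ largestRoot (psum S f k s) := by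
    intro k
    induction k with
    | zero =>
      exact fun _ => ⟨s₀, fun i hi => absurd hi (Nat.not_lt_zero _), le_refl _⟩
    | succ k ih =>
      intro hk1
      have hk : k < m := hk1
      obtain ⟨s, hsval, hsle⟩ := ih (le_of_lt hk)
      obtain ⟨g, hgint⟩ := hfam k hk s hsval
      have hupd : ∀ t ∈ S ⟨k, hk⟩, ∀ i : Fin m, (i : ℕ) < k + 1 →
          Function.update s ⟨k, hk⟩ t i ∈ S i := by
        intro t ht i hi
        rcases Nat.lt_succ_iff_lt_or_eq.mp hi with h | h
        · rw [Function.update_apply,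
            if_neg (fun he => by rw [he] at h; exact absurd h (lt_irrefl k))]
          exact hsval i h
        · have hik : i = (⟨k, hk⟩ : Fin m) := Fin.ext h
          rw [hik, Function.update_self]
          exact ht
      obtain ⟨t, ht, hle⟩ := key_step (S ⟨k, hk⟩) (hS _)
          (fun t => psum S f (k + 1) (Function.update s ⟨k, hk⟩ t))
          (fun t ht => (psum_deg_lc S hS f hf' _ (hupd t ht)).2) g hgint
      rw [psum_split S f hk s] at hle
      exact ⟨Function.update s ⟨k, hk⟩ t, hupd t ht, le_trans hsle hle⟩
  obtain ⟨s, hval, hle⟩ := main m le_rfl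
  have hvalid : ∀ i, s i ∈ S i := fun i => hval i i.isLt
  refine ⟨s, hvalid, ?_⟩
  rw [psum_zero_indep S f s s₀, ← psum_last S f s hvalid]
  exact hle
end

section
/- Let {f_{s_1,...,s_m}} be an interlacing family of real-rooted degree-n polynomials with positive leading coefficients indexed by S_1 × ⋯ × S_m. Then there exists an assignment (s_1,...,s_m) ∈ S_1 × ⋯ × S_m such that the largest root of f_{s_1,...,s_m} is at most the largest root of f_∅ = Σ f_{s_1,...,s_m}. -/
open Polynomial

section Aux
open Filter

/-- A nonzero polynomial with positive leading coefficient and no real roots is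
everywhere positive. -/
lemma aux_pos_of_no_roots (q : Polynomial ℝ) (hq : q ≠ 0) (hlc : 0 < q.leadingCoeff)
    (hr : q.roots = 0) (x : ℝ) : 0 < q.eval x := by
  have hne : ∀ y, q.eval y ≠ 0 := by
    intro y hy
    have : y ∈ q.roots := (mem_roots hq).2 hy
    simp [hr] at this
  rcases lt_or_gt_of_ne (hne x) with hneg | hpos
  · exfalso
    rcases Nat.eq_zero_or_pos q.natDegree with hd | hd
    · have : q.eval x = q.leadingCoeff := by
        conv_lhs => rw [eq_C_of_natDegree_eq_zero hd]
        simp [leadingCoeff, hd]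
      rw [this] at hneg; linarith
    · have hdeg : 0 < q.degree := natDegree_pos_iff_degree_pos.1 hd
      have htend := Polynomial.tendsto_atTop_of_leadingCoeff_nonneg q hdeg hlc.le
      obtain ⟨y, hy0, hxy⟩ := ((htend.eventually_ge_atTop 0).and (eventually_ge_atTop x)).exists
      have hc : ContinuousOn (fun z => q.eval z) (Set.Icc x y) := q.continuous.continuousOn
      have h0 : (0 : ℝ) ∈ Set.Icc (q.eval x) (q.eval y) := ⟨hneg.le, hy0⟩
      obtain ⟨z, -, hz⟩ := intermediate_value_Icc hxy hc h0
      exact hne z hz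
  · exact hpos

/-- A polynomial with positive leading coefficient which is nonpositive at `x`
has a root `≥ x`. -/
lemma aux_exists_root_ge (p : Polynomial ℝ) (hlc : 0 < p.leadingCoeff) (x : ℝ)
    (hx : p.eval x ≤ 0) : ∃ z, x ≤ z ∧ p.IsRoot z := by
  rcases eq_or_lt_of_le hx with heq | hneg
  · exact ⟨x, le_refl x, heq⟩
  · rcases Nat.eq_zero_or_pos p.natDegree with hd | hd
    · exfalso
      have : p.eval x = p.leadingCoeff := by
        conv_lhs => rw [eq_C_of_natDegree_eq_zero hd]
        simp [leadingCoeff, hd]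
      rw [this] at hneg; linarith
    · have hdeg : 0 < p.degree := natDegree_pos_iff_degree_pos.1 hd
      have htend := Polynomial.tendsto_atTop_of_leadingCoeff_nonneg p hdeg hlc.le
      obtain ⟨y, hy0, hxy⟩ := ((htend.eventually_ge_atTop 0).and (eventually_ge_atTop x)).exists
      have hc : ContinuousOn (fun z => p.eval z) (Set.Icc x y) := p.continuous.continuousOn
      have h0 : (0 : ℝ) ∈ Set.Icc (p.eval x) (p.eval y) := ⟨hneg.le, hy0⟩
      obtain ⟨z, hzmem, hz⟩ := intermediate_value_Icc hxy hc h0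
      exact ⟨z, hzmem.1, hz⟩

lemma aux_root_le_largestRoot {p : Polynomial ℝ} (hp : p ≠ 0) {y : ℝ} (hy : p.IsRoot y) :
    y ≤ largestRoot p :=
  le_csSup (Polynomial.finite_setOf_isRoot hp).bddAbove hy

lemma aux_largestRoot_le {p : Polynomial ℝ} {b : ℝ} (hne : ∃ y, p.IsRoot y)
    (h : ∀ y, p.IsRoot y → y ≤ b) : largestRoot p ≤ b :=
  csSup_le hne h

/-- Sign lemma: if `g` interlaces `F`, `F` has positive leading coefficient, `x` is at least
every root of `g` and at most the largest root of `F`, then `F.eval x ≤ 0`. -/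
lemma aux_eval_nonpos {g F : Polynomial ℝ} (h : Interlaces g F) (hF : 0 < F.leadingCoeff)
    {x : ℝ} (hg : ∀ r ∈ g.roots, r ≤ x) (hx : x ≤ largestRoot F) : F.eval x ≤ 0 := by
  obtain ⟨N, α, β, hmα, hmβ, hgr, hFr, hαβ⟩ := h
  have hF0 : F ≠ 0 := leadingCoeff_ne_zero.mp hF.ne'
  have hlastmem : β (Fin.last N) ∈ F.roots := by
    rw [hFr]; exact Multiset.mem_map_of_mem β (Finset.mem_univ_val _)
  have hroots_le : ∀ y ∈ F.roots, y ≤ β (Fin.last N) := by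
    rw [hFr]; intro y hy
    obtain ⟨i, -, rfl⟩ := Multiset.mem_map.mp hy
    exact hmβ (Fin.le_last i)
  have hxle : x ≤ β (Fin.last N) := by
    refine hx.trans (aux_largestRoot_le ⟨_, isRoot_of_mem_roots hlastmem⟩ ?_)
    exact fun y hy => hroots_le y ((mem_roots hF0).2 hy)
  have hcast_le : ∀ j : Fin N, β j.castSucc ≤ x := by
    intro j
    refine (hαβ j).1.trans (hg _ ?_)
    rw [hgr]; exact Multiset.mem_map_of_mem α (Finset.mem_univ_val _)
  obtain ⟨q, hq⟩ := F.prod_multiset_X_sub_C_dvd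
  have hmon : ((F.roots.map fun a => X - C a).prod).Monic :=
    monic_multiset_prod_of_monic _ _ fun a _ => monic_X_sub_C a
  have hq0 : q ≠ 0 := by rintro rfl; rw [mul_zero] at hq; exact hF0 hq
  have hqlc : q.leadingCoeff = F.leadingCoeff := by
    rw [hq, leadingCoeff_mul, hmon.leadingCoeff, one_mul]
  have hqroots : q.roots = 0 := by
    have hmul : ((F.roots.map fun a => X - C a).prod) * q ≠ 0 := hq ▸ hF0
    have := roots_mul hmul
    rw [← hq, roots_multiset_prod_X_sub_C] at this
    exact (left_eq_add.mp this)
  have hqpos : 0 < q.eval x :=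
    aux_pos_of_no_roots q hq0 (by rw [hqlc]; exact hF) hqroots x
  have heval : F.eval x = (F.roots.map fun a => (x - a)).prod * q.eval x := by
    conv_lhs => rw [hq]
    rw [eval_mul, eval_multiset_prod, Multiset.map_map]
    congr 1
    exact congrArg Multiset.prod (Multiset.map_congr rfl fun a _ => by
      simp [Function.comp_apply])
  have hprod : (F.roots.map fun a => (x - a)).prod ≤ 0 := by
    rw [hFr, Multiset.map_map, ← Finset.prod_eq_multiset_prod, Fin.prod_univ_castSucc]
    refine mul_nonpos_of_nonneg_of_nonpos ?_ ?_
    · exact Finset.prod_nonneg fun j _ => sub_nonneg.2 (hcast_le j)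
    · exact sub_nonpos.2 hxle
  rw [heval]
  exact mul_nonpos_of_nonpos_of_nonneg hprod hqpos.le

/-- Key lemma: given a common interlacer, some member has its largest root at most the
largest root of the sum. -/
lemma aux_key {γ : Type*} (B : Finset γ) (hB : B.Nonempty) (F : γ → Polynomial ℝ)
    (g : Polynomial ℝ) (hlc : ∀ t ∈ B, 0 < (F t).leadingCoeff)
    (hint : ∀ t ∈ B, Interlaces g (F t))
    (hslc : 0 < (∑ t ∈ B, F t).leadingCoeff) :
    ∃ t ∈ B, largestRoot (F t) ≤ largestRoot (∑ t ∈ B, F t) := by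
  obtain ⟨t0, ht0, hmin⟩ := B.exists_min_image (fun t => largestRoot (F t)) hB
  refine ⟨t0, ht0, ?_⟩
  set x := largestRoot (F t0) with hxdef
  have hg : ∀ r ∈ g.roots, r ≤ x := by
    obtain ⟨N, α, β, hmα, hmβ, hgr, hFr, hαβ⟩ := hint t0 ht0
    intro r hr
    rw [hgr] at hr
    obtain ⟨i, -, rfl⟩ := Multiset.mem_map.mp hr
    have h1 : α i ≤ β (Fin.last N) := (hαβ i).2.trans (hmβ (Fin.le_last _))
    have hF0 : F t0 ≠ 0 := leadingCoeff_ne_zero.mp (hlc t0 ht0).ne'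
    have hroot : (F t0).IsRoot (β (Fin.last N)) := isRoot_of_mem_roots (by
      rw [hFr]; exact Multiset.mem_map_of_mem β (Finset.mem_univ_val _))
    exact h1.trans (aux_root_le_largestRoot hF0 hroot)
  have heval : ∀ t ∈ B, (F t).eval x ≤ 0 := fun t ht =>
    aux_eval_nonpos (hint t ht) (hlc t ht) hg (hmin t ht)
  have hsum : (∑ t ∈ B, F t).eval x ≤ 0 := by
    rw [eval_finset_sum]
    exact Finset.sum_nonpos heval
  obtain ⟨z, hxz, hz⟩ := aux_exists_root_ge _ hslc x hsum
  exact hxz.trans (aux_root_le_largestRoot (leadingCoeff_ne_zero.mp hslc.ne') hz)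

/-- A nonempty sum of degree-`n` polynomials with positive leading coefficients again has
degree `n` and positive leading coefficient. -/
lemma aux_sum_deg {γ : Type*} (B : Finset γ) (hB : B.Nonempty) (p : γ → Polynomial ℝ) (n : ℕ)
    (h : ∀ t ∈ B, (p t).natDegree = n ∧ 0 < (p t).leadingCoeff) :
    (∑ t ∈ B, p t).natDegree = n ∧ 0 < (∑ t ∈ B, p t).leadingCoeff := by
  have hpos : 0 < (∑ t ∈ B, p t).coeff n := by
    rw [finset_sum_coeff]
    refine Finset.sum_pos (fun t ht => ?_) hB
    have hc : (p t).coeff n = (p t).leadingCoeff := by rw [← (h t ht).1, coeff_natDegree]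
    rw [hc]; exact (h t ht).2
  have hle : (∑ t ∈ B, p t).natDegree ≤ n :=
    natDegree_sum_le_of_forall_le B p fun t ht => (h t ht).1.le
  have hdeg : (∑ t ∈ B, p t).natDegree = n :=
    le_antisymm hle (le_natDegree_of_ne_zero hpos.ne')
  exact ⟨hdeg, by rw [← coeff_natDegree, hdeg]; exact hpos⟩

variable {ι : Type} [Fintype ι] [DecidableEq ι] {m : ℕ}

lemma aux_psum_congr (S : Fin m → Finset ι) (f : (Fin m → ι) → Polynomial ℝ) (k : ℕ)
    {s s' : Fin m → ι} (h : ∀ i : Fin m, (i : ℕ) < k → s i = s' i) :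
    psum S f k s = psum S f k s' := by
  unfold psum
  refine Finset.sum_congr ?_ fun _ _ => rfl
  ext t
  simp only [Finset.mem_filter, Finset.mem_univ, true_and]
  refine and_congr_right fun _ => forall_congr' fun i => imp_congr_right fun hi => ?_
  rw [h i hi]

lemma aux_psum_deg {n : ℕ} (S : Fin m → Finset ι) (hS : ∀ i, (S i).Nonempty)
    (f : (Fin m → ι) → Polynomial ℝ)
    (hf : ∀ s : Fin m → ι, (∀ i, s i ∈ S i) → (f s).natDegree = n ∧ 0 < (f s).leadingCoeff)
    (k : ℕ) (s : Fin m → ι) (hs : ∀ i : Fin m, (i : ℕ) < k → s i ∈ S i) :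
    (psum S f k s).natDegree = n ∧ 0 < (psum S f k s).leadingCoeff := by
  unfold psum
  refine aux_sum_deg _ ?_ _ _ ?_
  · refine ⟨fun i => if h : (i : ℕ) < k then s i else (hS i).choose, ?_⟩
    simp only [Finset.mem_filter, Finset.mem_univ, true_and]
    constructor
    · intro i
      by_cases h : (i : ℕ) < k
      · rw [dif_pos h]; exact hs i h
      · rw [dif_neg h]; exact (hS i).choose_spec
    · intro i hi; rw [dif_pos hi]
  · intro t ht
    simp only [Finset.mem_filter, Finset.mem_univ, true_and] at ht
    exact hf t ht.1

lemma aux_psum_succ (S : Fin m → Finset ι) (f : (Fin m → ι) → Polynomial ℝ) (k : ℕ)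
    (hk : k < m) (s : Fin m → ι) :
    psum S f k s = ∑ t ∈ S ⟨k, hk⟩, psum S f (k + 1) (Function.update s ⟨k, hk⟩ t) := by
  conv_lhs => rw [psum]
  rw [← Finset.sum_fiberwise_of_maps_to (g := fun u : Fin m → ι => u ⟨k, hk⟩)
    (t := S ⟨k, hk⟩) (fun u hu => by
      simp only [Finset.mem_filter, Finset.mem_univ, true_and] at hu
      exact hu.1 ⟨k, hk⟩) f]
  refine Finset.sum_congr rfl fun t ht => ?_
  unfold psum
  congr 1
  ext u
  simp only [Finset.mem_filter, Finset.mem_univ, true_and]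
  constructor
  · rintro ⟨⟨hval, hagr⟩, hk'⟩
    refine ⟨hval, fun i hi => ?_⟩
    by_cases h : i = ⟨k, hk⟩
    · subst h; rw [Function.update_self]; exact hk'
    · have hik : (i : ℕ) < k := by
        rcases Nat.lt_succ_iff_lt_or_eq.mp hi with h' | h'
        · exact h'
        · exact absurd (Fin.ext h') h
      rw [Function.update_of_ne h]
      exact hagr i hik
  · rintro ⟨hval, hagr⟩
    refine ⟨⟨hval, fun i hi => ?_⟩, ?_⟩
    · have h : i ≠ ⟨k, hk⟩ := fun h => by rw [h] at hi; exact absurd hi (lt_irrefl k)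
      have := hagr i (Nat.lt_succ_of_lt hi)
      rwa [Function.update_of_ne h] at this
    · have := hagr ⟨k, hk⟩ (Nat.lt_succ_self k)
      rwa [Function.update_self] at this

end Aux

/-- For an interlacing family of real-rooted degree-`n` polynomials with positive leading
coefficients, some member has its largest root at most the largest root of the total sum
`f_∅`. -/
theorem interlacingFamily_exists_largestRoot_le
    {ι : Type} [Fintype ι] [DecidableEq ι] {m n : ℕ} (S : Fin m → Finset ι)
    (hS : ∀ i, (S i).Nonempty)
    (f : (Fin m → ι) → Polynomial ℝ)
    (hf : ∀ s : Fin m → ι, (∀ i, s i ∈ S i) →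
      RealRooted (f s) ∧ (f s).natDegree = n ∧ 0 < (f s).leadingCoeff)
    (hfam : IsInterlacingFamily S f) :
    ∃ s : Fin m → ι, (∀ i, s i ∈ S i) ∧
      largestRoot (f s) ≤ largestRoot (psum S f 0 s) := by
  have hf' : ∀ s : Fin m → ι, (∀ i, s i ∈ S i) →
      (f s).natDegree = n ∧ 0 < (f s).leadingCoeff :=
    fun s h => ⟨(hf s h).2.1, (hf s h).2.2⟩
  have main : ∀ k, k ≤ m → ∃ s : Fin m → ι, (∀ i : Fin m, (i : ℕ) < k → s i ∈ S i) ∧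
      largestRoot (psum S f k s) ≤ largestRoot (psum S f 0 s) := by
    intro k
    induction k with
    | zero =>
      intro _
      exact ⟨fun i => (hS i).choose, fun i h => absurd h (Nat.not_lt_zero _), le_refl _⟩
    | succ k ih =>
      intro hk1
      obtain ⟨s, hs, hle⟩ := ih (Nat.le_of_succ_le hk1)
      have hkm : k < m := hk1
      obtain ⟨g, hg⟩ := hfam k hkm s hs
      set F := fun t => psum S f (k + 1) (Function.update s ⟨k, hkm⟩ t) with hFdef
      have hupd : ∀ t ∈ S ⟨k, hkm⟩, ∀ i : Fin m, (i : ℕ) < k + 1 →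
          Function.update s ⟨k, hkm⟩ t i ∈ S i := by
        intro t ht i hi
        by_cases h : i = ⟨k, hkm⟩
        · subst h; rw [Function.update_self]; exact ht
        · have hik : (i : ℕ) < k := by
            rcases Nat.lt_succ_iff_lt_or_eq.mp hi with h' | h'
            · exact h'
            · exact absurd (Fin.ext h') h
          rw [Function.update_of_ne h]
          exact hs i hik
      have hFdeg : ∀ t ∈ S ⟨k, hkm⟩, (F t).natDegree = n ∧ 0 < (F t).leadingCoeff :=
        fun t ht => aux_psum_deg S hS f hf' (k + 1) _ (hupd t ht)
      have hdecomp : psum S f k s = ∑ t ∈ S ⟨k, hkm⟩, F t := aux_psum_succ S f k hkm s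
      have hsum_lc : 0 < (∑ t ∈ S ⟨k, hkm⟩, F t).leadingCoeff := by
        rw [← hdecomp]
        exact (aux_psum_deg S hS f hf' k s hs).2
      obtain ⟨t0, ht0, hle2⟩ := aux_key (S ⟨k, hkm⟩) (hS _) F g
        (fun t ht => (hFdeg t ht).2) hg hsum_lc
      refine ⟨Function.update s ⟨k, hkm⟩ t0, hupd t0 ht0, ?_⟩
      calc largestRoot (psum S f (k + 1) (Function.update s ⟨k, hkm⟩ t0))
          = largestRoot (F t0) := rfl
        _ ≤ largestRoot (∑ t ∈ S ⟨k, hkm⟩, F t) := hle2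
        _ = largestRoot (psum S f k s) := by rw [hdecomp]
        _ ≤ largestRoot (psum S f 0 s) := hle
        _ = largestRoot (psum S f 0 (Function.update s ⟨k, hkm⟩ t0)) := by
            rw [aux_psum_congr S f 0 (fun i hi => absurd hi (Nat.not_lt_zero _))]
  obtain ⟨s, hs, hle⟩ := main m le_rfl
  have hsall : ∀ i, s i ∈ S i := fun i => hs i i.isLt
  have hps : psum S f m s = f s := by
    unfold psum
    have hfilt : Finset.univ.filter (fun t : Fin m → ι =>
        (∀ i, t i ∈ S i) ∧ ∀ i : Fin m, (i : ℕ) < m → t i = s i) = {s} := by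
      ext t
      simp only [Finset.mem_filter, Finset.mem_univ, true_and, Finset.mem_singleton]
      constructor
      · rintro ⟨-, hagr⟩
        exact funext fun i => hagr i i.isLt
      · rintro rfl
        exact ⟨hsall, fun i _ => rfl⟩
    rw [hfilt, Finset.sum_singleton]
  exact ⟨s, hsall, by rw [← hps]; exact hle⟩
end

section
/- If real-rooted polynomials f_1,...,f_k of equal degree with positive leading coefficients have a common interlacing, then the largest root of the sum f_1 + ⋯ + f_k is at most the largest root of some f_j, and also at least the largest root of some f_{j'}. -/
open Polynomial

lemma rootSet_finite (p : Polynomial ℝ) (hp : p ≠ 0) : {x : ℝ | p.IsRoot x}.Finite := by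
  have : {x : ℝ | p.IsRoot x} = ↑p.roots.toFinset := by
    ext x; simp [Polynomial.mem_roots, hp]
  rw [this]; exact (p.roots.toFinset : Finset ℝ).finite_toSet

lemma isRoot_le_largestRoot (p : Polynomial ℝ) (hp : p ≠ 0) {x : ℝ} (hx : p.IsRoot x) :
    x ≤ largestRoot p :=
  le_csSup (rootSet_finite p hp).bddAbove hx

lemma largestRoot_isRoot (p : Polynomial ℝ) (hp : p ≠ 0) (hne : ∃ x, p.IsRoot x) :
    p.IsRoot (largestRoot p) :=
  Set.Nonempty.csSup_mem hne (rootSet_finite p hp)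

lemma eval_eq_prod (p : Polynomial ℝ) (h : p.roots.card = p.natDegree) (x : ℝ) :
    p.eval x = p.leadingCoeff * (p.roots.map (fun r => x - r)).prod := by
  conv_lhs => rw [← Polynomial.C_leadingCoeff_mul_prod_multiset_X_sub_C h]
  simp [Polynomial.eval_multiset_prod, Multiset.map_map, Function.comp]

lemma eval_pos_of_gt_roots (p : Polynomial ℝ) (h : RealRooted p) (hl : 0 < p.leadingCoeff)
    {x : ℝ} (hx : ∀ r ∈ p.roots, r < x) : 0 < p.eval x := by
  rw [eval_eq_prod p h x]
  refine mul_pos hl (Multiset.prod_pos ?_)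
  intro a ha
  obtain ⟨r, hr, rfl⟩ := Multiset.mem_map.mp ha
  linarith [hx r hr]

lemma univ_val_map_castSuccEmb (m : ℕ) (β : Fin (m+1) → ℝ) :
    (Finset.univ.val.map β) =
      β (Fin.last m) ::ₘ (Finset.univ.val.map (fun i : Fin m => β i.castSucc)) := by
  rw [Fin.univ_castSuccEmb, Finset.cons_val, Multiset.map_cons, Finset.map_val,
    Multiset.map_map]
  rfl

/-- If real-rooted degree-`n` polynomials with positive leading coefficients have a common
interlacing, then the largest root of their sum is at most the largest root of some member,
and at least the largest root of some member. -/
theorem commonInterlacing_largestRoot_sum_between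
    {k n : ℕ} (hk : 0 < k) (f : Fin k → Polynomial ℝ)
    (hf : ∀ j, RealRooted (f j) ∧ (f j).natDegree = n ∧ 0 < (f j).leadingCoeff)
    (hci : ∃ g, ∀ j, Interlaces g (f j)) :
    (∃ j, largestRoot (∑ i, f i) ≤ largestRoot (f j)) ∧
    (∃ j', largestRoot (f j') ≤ largestRoot (∑ i, f i)) := by
  obtain ⟨g, hg⟩ := hci
  have hne : ∀ j, f j ≠ 0 := fun j => leadingCoeff_ne_zero.mp (hf j).2.2.ne'
  have hroot : ∀ j, ∃ x, (f j).IsRoot x := by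
    intro j
    obtain ⟨m, α, β, hmα, hmβ, hgr, hfr, hib⟩ := hg j
    refine ⟨β (Fin.last m), ?_⟩
    have hmem : β (Fin.last m) ∈ (f j).roots := by
      rw [hfr]
      exact Multiset.mem_map_of_mem β (Finset.mem_val.mpr (Finset.mem_univ _))
    exact isRoot_of_mem_roots hmem
  have hmax : ∀ j, ∀ {x : ℝ}, (f j).IsRoot x → x ≤ largestRoot (f j) :=
    fun j {x} hx => isRoot_le_largestRoot (f j) (hne j) hx
  have hLmem : ∀ j, (f j).IsRoot (largestRoot (f j)) :=
    fun j => largestRoot_isRoot (f j) (hne j) (hroot j)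
  obtain ⟨j0, -, hj0⟩ := Finset.exists_max_image Finset.univ (fun j => largestRoot (f j))
    ⟨⟨0, hk⟩, Finset.mem_univ _⟩
  obtain ⟨j1, -, hj1⟩ := Finset.exists_min_image Finset.univ (fun j => largestRoot (f j))
    ⟨⟨0, hk⟩, Finset.mem_univ _⟩
  set t := largestRoot (f j0) with ht
  set s := largestRoot (f j1) with hs
  have hj0' : ∀ j, largestRoot (f j) ≤ t := fun j => hj0 j (Finset.mem_univ _)
  have hj1' : ∀ j, s ≤ largestRoot (f j) := fun j => hj1 j (Finset.mem_univ _)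
  -- every root of g is at most every largest root
  have hgroots : ∀ j, ∀ x ∈ g.roots, x ≤ largestRoot (f j) := by
    intro j x hx
    obtain ⟨m, α, β, hmα, hmβ, hgr, hfr, hib⟩ := hg j
    rw [hgr] at hx
    obtain ⟨i, -, rfl⟩ := Multiset.mem_map.mp hx
    have h1 : α i ≤ β i.succ := (hib i).2
    have h2 : β i.succ ≤ β (Fin.last m) := hmβ (Fin.le_last _)
    have h3 : (f j).IsRoot (β (Fin.last m)) := by
      apply isRoot_of_mem_roots
      rw [hfr]
      exact Multiset.mem_map_of_mem β (Finset.mem_val.mpr (Finset.mem_univ _))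
    exact le_trans h1 (le_trans h2 (hmax j h3))
  -- f j evaluated at s is nonpositive
  have hsign : ∀ j, (f j).eval s ≤ 0 := by
    intro j
    obtain ⟨m, α, β, hmα, hmβ, hgr, hfr, hib⟩ := hg j
    have hdecomp : (f j).roots =
        β (Fin.last m) ::ₘ (Finset.univ.val.map (fun i : Fin m => β i.castSucc)) := by
      rw [hfr]; exact univ_val_map_castSuccEmb m β
    rw [eval_eq_prod (f j) (hf j).1 s, hdecomp, Multiset.map_cons, Multiset.prod_cons]
    -- the largest root of f j equals some β i ≤ β (last m)
    have hlast : largestRoot (f j) ≤ β (Fin.last m) := by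
      have hmem : largestRoot (f j) ∈ (f j).roots := by
        rw [Polynomial.mem_roots (hne j)]; exact hLmem j
      rw [hfr] at hmem
      obtain ⟨i, -, hi⟩ := Multiset.mem_map.mp hmem
      rw [← hi]; exact hmβ (Fin.le_last _)
    have h1 : s - β (Fin.last m) ≤ 0 := by
      have := hj1' j; linarith
    have h2 : 0 ≤ ((Finset.univ.val.map (fun i : Fin m => β i.castSucc)).map
        (fun r => s - r)).prod := by
      apply Multiset.prod_nonneg
      intro a ha
      obtain ⟨b, hb, rfl⟩ := Multiset.mem_map.mp ha
      obtain ⟨i, -, rfl⟩ := Multiset.mem_map.mp hb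
      have hαg : α i ∈ g.roots := by
        rw [hgr]; exact Multiset.mem_map_of_mem α (Finset.mem_val.mpr (Finset.mem_univ _))
      have : β i.castSucc ≤ α i := (hib i).1
      have : α i ≤ s := hgroots j1 (α i) hαg
      linarith [(hib i).1]
    have h3 : (s - β (Fin.last m)) *
        ((Finset.univ.val.map (fun i : Fin m => β i.castSucc)).map (fun r => s - r)).prod ≤ 0 :=
      mul_nonpos_of_nonpos_of_nonneg h1 h2
    exact mul_nonpos_of_nonneg_of_nonpos (hf j).2.2.le h3
  have hst : s ≤ t := hj1' j0
  -- the sum is positive beyond t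
  have hPpos : ∀ x : ℝ, t < x → 0 < (∑ i, f i).eval x := by
    intro x hx
    rw [Polynomial.eval_finset_sum]
    apply Finset.sum_pos
    · intro j _
      apply eval_pos_of_gt_roots (f j) (hf j).1 (hf j).2.2
      intro r hr
      have h1 : r ≤ largestRoot (f j) := hmax j (isRoot_of_mem_roots hr)
      have h2 : largestRoot (f j) ≤ t := hj0' j
      linarith
    · exact ⟨⟨0, hk⟩, Finset.mem_univ _⟩
  have hPs : (∑ i, f i).eval s ≤ 0 := by
    rw [Polynomial.eval_finset_sum]
    exact Finset.sum_nonpos fun j _ => hsign j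
  -- intermediate value theorem
  have hcont : ContinuousOn (fun x : ℝ => (∑ i, f i).eval x) (Set.Icc s (t + 1)) :=
    ((∑ i, f i).continuous_aeval).continuousOn
  have h01 : (0 : ℝ) ∈ Set.Icc ((∑ i, f i).eval s) ((∑ i, f i).eval (t + 1)) :=
    ⟨hPs, (hPpos (t + 1) (by linarith)).le⟩
  obtain ⟨c, hc, hc0⟩ := intermediate_value_Icc (by linarith : s ≤ t + 1) hcont h01
  have hcroot : (∑ i, f i).IsRoot c := hc0
  have hub : ∀ x ∈ {x : ℝ | (∑ i, f i).IsRoot x}, x ≤ t := by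
    intro x hx
    by_contra h
    push_neg at h
    exact (hPpos x h).ne' hx
  constructor
  · exact ⟨j0, csSup_le ⟨c, hcroot⟩ hub⟩
  · exact ⟨j1, le_trans hc.1 (le_csSup ⟨t, hub⟩ hcroot)⟩
end

section
/- Let G be a finite simple graph on n vertices and σ a random orientation of G (each edge oriented independently uniformly). If π is a permutation of V that is not an involution whose 2-cycles are all edges of G, then the expectation over σ of Π_{v∈V} (xI − H(G^σ))_{v,π(v)} is the zero polynomial. -/
open Polynomial Matrix

/-- Flip the Boolean sign on the ordered pairs `(a,b)` and `(b,a)`. -/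
def flipAt {V : Type} [DecidableEq V] (a b : V) (s : V → V → Bool) : V → V → Bool :=
  fun u v => if (u = a ∧ v = b) ∨ (u = b ∧ v = a) then !(s u v) else s u v

/-- If `π` is a permutation of the vertices which is not an involution whose 2-cycles are
all edges of `G`, then the expectation over a uniformly random orientation `σ` of
`Π_v (xI − H(G^σ))_{v, π v}` is the zero polynomial.  (The expectation is the uniform
average over antisymmetric sign functions, equivalently over all orientations.) -/
theorem expectation_permProduct_eq_zero
    {V : Type} [Fintype V] [DecidableEq V] (G : SimpleGraph V) [DecidableRel G.Adj]
    (π : Equiv.Perm V)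
    (hπ : ¬ (π * π = 1 ∧ ∀ v, π v ≠ v → G.Adj v (π v))) :
    ∑ s ∈ Finset.univ.filter (fun s : V → V → Bool =>
        ∀ u v, G.Adj u v → s v u = !(s u v)),
      ∏ v : V, Matrix.charmatrix (hermAdj (oriOfBool G s)) v (π v) = 0 := by
  by_cases hB : ∀ v, π v ≠ v → G.Adj v (π v)
  · -- all moved vertices go to neighbors; then π is not an involution
    have h2 : ∃ v0, π (π v0) ≠ v0 := by
      by_contra h
      push_neg at h
      exact hπ ⟨Equiv.ext fun v => by simp [Equiv.Perm.mul_apply, h], hB⟩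
    obtain ⟨v0, h2⟩ := h2
    have hmove : π v0 ≠ v0 := fun h => h2 (by rw [h, h])
    have hadj : G.Adj v0 (π v0) := hB v0 hmove
    have hfac : ∀ (s : V → V → Bool) (v : V),
        Matrix.charmatrix (hermAdj (oriOfBool G (flipAt v0 (π v0) s))) v (π v)
          = (if v = v0 then (-1 : Polynomial ℂ) else 1) *
            Matrix.charmatrix (hermAdj (oriOfBool G s)) v (π v) := by
      intro s v
      by_cases hv : v = v0
      · subst hv
        have hflip : flipAt v (π v) s v (π v) = !(s v (π v)) := by
          simp [flipAt]
        have hent : hermAdj (oriOfBool G (flipAt v (π v) s)) v (π v)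
            = - hermAdj (oriOfBool G s) v (π v) := by
          simp only [hermAdj, oriOfBool, hflip, if_pos hadj]
          cases s v (π v) <;> simp
        rw [Matrix.charmatrix_apply, Matrix.charmatrix_apply, hent,
          Matrix.diagonal_apply_ne _ (Ne.symm hmove)]
        simp only [map_neg, ite_true, if_true]
        ring
      · have hflip : flipAt v0 (π v0) s v (π v) = s v (π v) := by
          apply if_neg
          rintro (⟨h1, -⟩ | ⟨h1, hh2⟩)
          · exact hv h1
          · subst h1; exact h2 hh2
        have hent : hermAdj (oriOfBool G (flipAt v0 (π v0) s)) v (π v)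
            = hermAdj (oriOfBool G s) v (π v) := by
          simp [hermAdj, oriOfBool, hflip]
        rw [Matrix.charmatrix_apply, Matrix.charmatrix_apply, hent, if_neg hv, one_mul]
    have hneg : ∀ s : V → V → Bool,
        ∏ v : V, Matrix.charmatrix (hermAdj (oriOfBool G (flipAt v0 (π v0) s))) v (π v)
          = - ∏ v : V, Matrix.charmatrix (hermAdj (oriOfBool G s)) v (π v) := by
      intro s
      calc ∏ v : V, Matrix.charmatrix (hermAdj (oriOfBool G (flipAt v0 (π v0) s))) v (π v)
          = ∏ v : V, (if v = v0 then (-1 : Polynomial ℂ) else 1) *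
              Matrix.charmatrix (hermAdj (oriOfBool G s)) v (π v) :=
            Finset.prod_congr rfl fun v _ => hfac s v
        _ = (∏ v : V, if v = v0 then (-1 : Polynomial ℂ) else 1) *
              ∏ v : V, Matrix.charmatrix (hermAdj (oriOfBool G s)) v (π v) :=
            Finset.prod_mul_distrib
        _ = - ∏ v : V, Matrix.charmatrix (hermAdj (oriOfBool G s)) v (π v) := by
            rw [Finset.prod_ite_eq' Finset.univ v0 (fun _ => (-1 : Polynomial ℂ))]
            simp
    refine Finset.sum_involution (fun s _ => flipAt v0 (π v0) s) ?_ ?_ ?_ ?_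
    · intro s hs
      change (∏ v : V, Matrix.charmatrix (hermAdj (oriOfBool G s)) v (π v)) +
        (∏ v : V, Matrix.charmatrix (hermAdj (oriOfBool G (flipAt v0 (π v0) s))) v (π v)) = 0
      rw [hneg s]; ring
    · intro s hs _
      intro heq
      have := congrFun (congrFun heq v0) (π v0)
      simp [flipAt] at this
    · intro s hs
      simp only [Finset.mem_filter, Finset.mem_univ, true_and] at hs ⊢
      intro u v huv
      by_cases hp : (u = v0 ∧ v = π v0) ∨ (u = π v0 ∧ v = v0)
      · have hp' : (v = v0 ∧ u = π v0) ∨ (v = π v0 ∧ u = v0) := by tauto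
        simp only [flipAt, if_pos hp, if_pos hp', hs u v huv, Bool.not_not]
      · have hp' : ¬((v = v0 ∧ u = π v0) ∨ (v = π v0 ∧ u = v0)) := by tauto
        simp only [flipAt, if_neg hp, if_neg hp', hs u v huv]
    · intro s hs
      funext u v
      by_cases hp : (u = v0 ∧ v = π v0) ∨ (u = π v0 ∧ v = v0) <;>
        simp [flipAt, hp]
  · push_neg at hB
    obtain ⟨v, hv, hna⟩ := hB
    refine Finset.sum_eq_zero fun s _ => Finset.prod_eq_zero (Finset.mem_univ v) ?_
    rw [Matrix.charmatrix_apply_ne _ _ _ (Ne.symm hv)]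
    simp [hermAdj, oriOfBool, hna]
end

section
/- Let f_1, ..., f_k be real-rooted polynomials of degree n with positive leading coefficients that have a common interlacing. Then their sum f_1 + ⋯ + f_k is real-rooted. -/
open Polynomial

section Aux
open Finset Filter

lemma card_filt (n : ℕ) (p : Fin (n+1)) : (Finset.univ.filter fun l => ¬ l ≤ p).card = n - p := by
  have h : (Finset.univ.filter fun l => ¬ l ≤ p) = Finset.Ioi p := by
    ext; simp [Finset.mem_Ioi]
  rw [h, Fin.card_Ioi]; omega

lemma sign_eval (n : ℕ) (c : ℝ) (hc : 0 < c) (β : Fin (n+1) → ℝ) (hβ : Monotone β)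
    (i : Fin n) (x : ℝ) (h1 : β i.castSucc ≤ x) (h2 : x ≤ β i.succ) :
    0 ≤ (-1)^(n - (i:ℕ)) * (C c * ∏ l, (X - C (β l))).eval x := by
  have he : (C c * ∏ l, (X - C (β l))).eval x = c * ∏ l, (x - β l) := by
    simp [eval_prod]
  rw [he, ← Finset.prod_filter_mul_prod_filter_not Finset.univ (fun l => l ≤ i.castSucc)]
  have hA : 0 ≤ ∏ l ∈ Finset.univ.filter (fun l => l ≤ i.castSucc), (x - β l) := by
    apply Finset.prod_nonneg
    intro l hl
    simp only [Finset.mem_filter] at hl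
    have := hβ hl.2
    linarith
  have hB : ∏ l ∈ Finset.univ.filter (fun l => ¬ l ≤ i.castSucc), (x - β l)
      = (-1)^(n - (i:ℕ)) * ∏ l ∈ Finset.univ.filter (fun l => ¬ l ≤ i.castSucc), (β l - x) := by
    calc ∏ l ∈ Finset.univ.filter (fun l => ¬ l ≤ i.castSucc), (x - β l)
        = ∏ l ∈ Finset.univ.filter (fun l => ¬ l ≤ i.castSucc), (-1) * (β l - x) :=
          Finset.prod_congr rfl (by intros; ring)
      _ = (-1)^((Finset.univ.filter (fun l => ¬ l ≤ i.castSucc)).card)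
            * ∏ l ∈ Finset.univ.filter (fun l => ¬ l ≤ i.castSucc), (β l - x) := by
          rw [Finset.prod_mul_distrib, Finset.prod_const]
      _ = _ := by rw [card_filt]; simp
  have hC : 0 ≤ ∏ l ∈ Finset.univ.filter (fun l => ¬ l ≤ i.castSucc), (β l - x) := by
    apply Finset.prod_nonneg
    intro l hl
    simp only [Finset.mem_filter, not_le] at hl
    have : i.succ ≤ l := hl.2
    have := hβ this
    linarith
  rw [hB]
  set A := ∏ l ∈ Finset.univ.filter (fun l => ¬ l ≤ i.castSucc), (β l - x)
  set A2 := ∏ l ∈ Finset.univ.filter (fun l => l ≤ i.castSucc), (x - β l)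
  have h1' : ((-1:ℝ)^(n - (i:ℕ)))^2 = 1 := by
    rw [← pow_mul, mul_comm, pow_mul]; simp
  calc (0:ℝ) ≤ c * (A2 * A) := mul_nonneg hc.le (mul_nonneg hA hC)
    _ = (-1)^(n - (i:ℕ)) * (c * (A2 * ((-1)^(n - (i:ℕ)) * A))) := by
        rw [show (-1:ℝ)^(n - (i:ℕ)) * (c * (A2 * ((-1)^(n - (i:ℕ)) * A))) = ((-1)^(n - (i:ℕ)))^2 * (c * (A2 * A)) by ring, h1', one_mul]

lemma term_monic (n : ℕ) (β : Fin (n+1) → ℝ) : (∏ l, (X - C (β l))).Monic :=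
  monic_prod_of_monic _ _ (fun l _ => monic_X_sub_C (β l))

lemma term_natDegree (n : ℕ) (β : Fin (n+1) → ℝ) : (∏ l, (X - C (β l))).natDegree = n + 1 := by
  rw [natDegree_prod _ _ (fun l _ => X_sub_C_ne_zero (β l))]
  simp

lemma F_coeff {n k : ℕ} (c : Fin k → ℝ) (β : Fin k → Fin (n+1) → ℝ) :
    (∑ j, C (c j) * ∏ l, (X - C (β j l))).coeff (n+1) = ∑ j, c j := by
  rw [finset_sum_coeff]
  congr 1; ext j
  rw [coeff_C_mul]
  have h1 : (∏ l, (X - C (β j l))).coeff (n+1) = 1 := by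
    have := (term_monic n (β j)).leadingCoeff
    rwa [leadingCoeff, term_natDegree] at this
  rw [h1, mul_one]

lemma F_natDegree_le {n k : ℕ} (c : Fin k → ℝ) (β : Fin k → Fin (n+1) → ℝ) :
    (∑ j, C (c j) * ∏ l, (X - C (β j l))).natDegree ≤ n + 1 := by
  apply natDegree_sum_le_of_forall_le
  intro j _
  calc (C (c j) * ∏ l, (X - C (β j l))).natDegree ≤ _ := natDegree_C_mul_le _ _
    _ ≤ n + 1 := le_of_eq (term_natDegree n (β j))

lemma F_natDegree {n k : ℕ} (hk : 0 < k) (c : Fin k → ℝ) (hc : ∀ j, 0 < c j)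
    (β : Fin k → Fin (n+1) → ℝ) :
    (∑ j, C (c j) * ∏ l, (X - C (β j l))).natDegree = n + 1 ∧
    (∑ j, C (c j) * ∏ l, (X - C (β j l))).leadingCoeff = ∑ j, c j ∧
    0 < ∑ j, c j := by
  have hpos : 0 < ∑ j, c j :=
    Finset.sum_pos (fun j _ => hc j) (univ_nonempty_iff.2 ⟨⟨0, hk⟩⟩)
  have hco := F_coeff c β
  have hdeg : (∑ j, C (c j) * ∏ l, (X - C (β j l))).natDegree = n + 1 :=
    le_antisymm (F_natDegree_le c β) (le_natDegree_of_ne_zero (by rw [hco]; exact hpos.ne'))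
  exact ⟨hdeg, by rw [leadingCoeff, hdeg, hco], hpos⟩

lemma ev_tail (F : Polynomial ℝ) (hd : 0 < F.degree) (hl : 0 < F.leadingCoeff) :
    ∀ᶠ x in atTop, 0 < F.eval x :=
  (F.tendsto_atTop_of_leadingCoeff_nonneg hd hl.le).eventually_gt_atTop 0

lemma ev_head (F : Polynomial ℝ) (hd : 0 < F.degree) (hl : 0 < F.leadingCoeff) :
    ∀ᶠ x in atBot, 0 < (-1)^F.natDegree * F.eval x := by
  set d := F.natDegree with hdd
  set G : Polynomial ℝ := C ((-1)^d) * (F.comp (-X)) with hG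
  have hXd : (-X : Polynomial ℝ).natDegree = 1 := by simp
  have hcompd : (F.comp (-X)).natDegree = d := by
    rw [natDegree_comp, hXd, mul_one]
  have hcomplc : (F.comp (-X)).leadingCoeff = F.leadingCoeff * (-1)^d := by
    rw [leadingCoeff_comp (by rw [hXd]; norm_num)]
    congr 1
    rw [show (-X : Polynomial ℝ).leadingCoeff = -1 by simp]
  have hGlc : G.leadingCoeff = F.leadingCoeff := by
    rw [hG, leadingCoeff_mul, leadingCoeff_C, hcomplc]
    rw [show (-1:ℝ)^d * (F.leadingCoeff * (-1)^d) = F.leadingCoeff * ((-1)^d)^2 by ring]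
    rw [← pow_mul, mul_comm d 2, pow_mul]; norm_num
  have hG0 : G ≠ 0 := by
    intro h; rw [h] at hGlc; simp at hGlc; exact hl.ne' hGlc.symm
  have hGd : 0 < G.degree := by
    have : G.natDegree = d := by
      rw [hG, natDegree_C_mul (by positivity : ((-1:ℝ))^d ≠ 0), hcompd]
    rw [← natDegree_pos_iff_degree_pos, this, hdd]
    exact natDegree_pos_iff_degree_pos.2 hd
  have := (ev_tail G hGd (hGlc ▸ hl)).and (eventually_gt_atTop 0)
  rw [eventually_atTop] at this
  obtain ⟨M, hM⟩ := this
  rw [eventually_atBot]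
  refine ⟨-M, fun x hx => ?_⟩
  have h1 := (hM (-x) (by linarith)).1
  rw [hG] at h1
  simpa using h1



lemma strict_case (n : ℕ) (F : Polynomial ℝ) (hd : F.natDegree = n+1) (hl : 0 < F.leadingCoeff)
    (α : Fin n → ℝ) (hα : Monotone α)
    (hsign : ∀ i : Fin n, 0 < (-1)^(n - (i:ℕ)) * F.eval (α i)) :
    F.roots.card = n+1 := by
  have hF0 : F ≠ 0 := leadingCoeff_ne_zero.mp hl.ne'
  have hdeg : 0 < F.degree := natDegree_pos_iff_degree_pos.mp (by omega)
  -- endpoints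
  obtain ⟨a, ha1, ha2⟩ : ∃ a, (0 < (-1)^(n+1) * F.eval a) ∧ ∀ i, a < α i := by
    have := (ev_head F hdeg hl).and (eventually_all.2 fun i : Fin n => eventually_lt_atBot (α i))
    rw [hd] at this
    exact this.exists
  obtain ⟨b, hb1, hb2, hb3⟩ : ∃ b, (0 < F.eval b) ∧ (∀ i, α i < b) ∧ a < b := by
    have := ((ev_tail F hdeg hl).and
      (eventually_all.2 fun i : Fin n => eventually_gt_atTop (α i))).and (eventually_gt_atTop a)
    obtain ⟨b, ⟨h1, h2⟩, h3⟩ := this.exists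
    exact ⟨b, h1, h2, h3⟩
  -- the chain
  set y : Fin (n+2) → ℝ := Fin.cons a (Fin.snoc α b) with hy
  have hy0 : y 0 = a := rfl
  have hsy : ∀ i : Fin (n+2), 0 < (-1)^(n+1-(i:ℕ)) * F.eval (y i) := by
    intro i
    induction i using Fin.cases with
    | zero => simpa [hy] using ha1
    | succ j =>
      induction j using Fin.lastCases with
      | last =>
        have e : y (Fin.last n).succ = b := by rw [hy, Fin.cons_succ, Fin.snoc_last]
        have e2 : n+1-((Fin.last n).succ : ℕ) = 0 := by simp
        rw [e, e2, pow_zero, one_mul]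
        exact hb1
      | cast m => simpa [hy] using hsign m
  have hmono : Monotone y := by
    rw [Fin.monotone_iff_le_succ]
    intro i
    induction i using Fin.cases with
    | zero =>
      rcases Nat.eq_zero_or_pos n with hn | hn
      · subst hn
        have e1 : y (0:Fin 1).castSucc = a := rfl
        have e2 : y (0:Fin 1).succ = b := by simp [hy, Fin.snoc]
        rw [e1, e2]
        linarith
      · have h0 : (0 : Fin (n+1)) = (⟨0, hn⟩ : Fin n).castSucc := by
          ext; simp
        have : y (0:Fin (n+1)).succ = α ⟨0, hn⟩ := by
          rw [hy, Fin.cons_succ, h0, Fin.snoc_castSucc]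
        have e1 : y (0:Fin (n+1)).castSucc = a := rfl
        rw [e1, this]
        exact (ha2 _).le
    | succ m =>
      have h1 : y (m.succ).castSucc = α m := by
        rw [← Fin.succ_castSucc, hy, Fin.cons_succ, Fin.snoc_castSucc]
      rcases Fin.eq_castSucc_or_eq_last m.succ with ⟨m', hm'⟩ | hm'
      · have h2 : y (m.succ).succ = α m' := by
          rw [hy, Fin.cons_succ, hm', Fin.snoc_castSucc]
        rw [h1, h2]
        apply hα
        have : (m.succ : ℕ) = (m' : ℕ) := by rw [hm']; simp
        rw [Fin.le_def]; simp at this ⊢; omega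
      · have h2 : y (m.succ).succ = b := by
          rw [hy, Fin.cons_succ, hm', Fin.snoc_last]
        rw [h1, h2]
        exact (hb2 m).le
  -- roots in each interval
  have hroot : ∀ i : Fin (n+1), ∃ r, r ∈ Set.Ioo (y i.castSucc) (y i.succ) ∧ F.eval r = 0 := by
    intro i
    have hle : y i.castSucc ≤ y i.succ := hmono (Fin.castSucc_le_succ i)
    have s1 := hsy i.castSucc
    have s2 := hsy i.succ
    have e1 : (i.castSucc : ℕ) = (i : ℕ) := rfl
    have e2 : (i.succ : ℕ) = (i : ℕ) + 1 := rfl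
    rw [e1] at s1
    rw [e2, show n+1-((i:ℕ)+1) = n - i by omega] at s2
    rw [show n+1-(i:ℕ) = (n - (i:ℕ))+1 by omega] at s1
    have hcont : ContinuousOn (fun x => F.eval x) (Set.Icc (y i.castSucc) (y i.succ)) :=
      F.continuous.continuousOn
    rcases Nat.even_or_odd (n - (i:ℕ)) with he | ho
    · rw [he.neg_one_pow, one_mul] at s2
      rw [pow_succ, he.neg_one_pow, one_mul, neg_one_mul] at s1
      have h0 : (0:ℝ) ∈ Set.Ioo (F.eval (y i.castSucc)) (F.eval (y i.succ)) := by
        constructor <;> linarith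
      obtain ⟨r, hr, hr2⟩ := intermediate_value_Ioo hle hcont h0
      exact ⟨r, hr, hr2⟩
    · rw [ho.neg_one_pow, neg_one_mul] at s2
      rw [pow_succ, ho.neg_one_pow, neg_one_mul, neg_neg, one_mul] at s1
      have h0 : (0:ℝ) ∈ Set.Ioo (F.eval (y i.succ)) (F.eval (y i.castSucc)) := by
        constructor <;> linarith
      obtain ⟨r, hr, hr2⟩ := intermediate_value_Ioo' hle hcont h0
      exact ⟨r, hr, hr2⟩
  choose r hr hr0 using hroot
  have hrs : StrictMono r := by
    intro i j hij
    calc r i < y i.succ := (hr i).2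
      _ ≤ y j.castSucc := by
          apply hmono
          have hij' : (i:ℕ) < (j:ℕ) := hij
          rw [Fin.le_def]
          simp only [Fin.val_succ, Fin.coe_castSucc]
          omega
      _ < r j := (hr j).1
  have hsub : Finset.image r Finset.univ ⊆ F.roots.toFinset := by
    intro x hx
    simp only [Finset.mem_image] at hx
    obtain ⟨i, _, rfl⟩ := hx
    rw [Multiset.mem_toFinset, mem_roots hF0]
    exact hr0 i
  have h1 : n + 1 ≤ F.roots.card := by
    calc n + 1 = (Finset.image r Finset.univ).card := by
          rw [Finset.card_image_of_injective _ hrs.injective, Finset.card_univ, Fintype.card_fin]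
      _ ≤ F.roots.toFinset.card := Finset.card_le_card hsub
      _ ≤ F.roots.card := F.roots.toFinset_card_le
  have h2 : F.roots.card ≤ n + 1 := hd ▸ F.card_roots'
  omega

lemma removal (n : ℕ) (β : Fin (n+2) → ℝ) (hβ : Monotone β) (α : Fin (n+1) → ℝ) (hα : Monotone α)
    (hint : ∀ i : Fin (n+1), β i.castSucc ≤ α i ∧ α i ≤ β i.succ)
    (i0 : Fin (n+1)) (p : Fin (n+2)) (hp : p = i0.castSucc ∨ p = i0.succ) (hpv : β p = α i0)
    (m : Fin n) :
    β (p.succAbove m.castSucc) ≤ α (i0.succAbove m) ∧ α (i0.succAbove m) ≤ β (p.succAbove m.succ) := by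
  have hle : ∀ (x y : Fin (n+1)), (x:ℕ) ≤ (y:ℕ) → α x ≤ α y := fun x y h => hα h
  have hleβ : ∀ (x y : Fin (n+2)), (x:ℕ) ≤ (y:ℕ) → β x ≤ β y := fun x y h => hβ h
  by_cases hm : (m:ℕ) < (i0:ℕ)
  · have ha : i0.succAbove m = m.castSucc :=
      Fin.succAbove_of_castSucc_lt _ _ (by rw [Fin.lt_def]; simpa using hm)
    rw [ha]
    rcases hp with rfl | rfl
    · have g1 : (i0.castSucc).succAbove m.castSucc = m.castSucc.castSucc :=
        Fin.succAbove_of_castSucc_lt _ _ (by rw [Fin.lt_def]; simpa using hm)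
      refine ⟨g1 ▸ (hint m.castSucc).1, ?_⟩
      by_cases hm1 : (m:ℕ)+1 < (i0:ℕ)
      · have g2 : (i0.castSucc).succAbove m.succ = m.succ.castSucc :=
          Fin.succAbove_of_castSucc_lt _ _ (by rw [Fin.lt_def]; simpa using hm1)
        rw [g2, ← Fin.succ_castSucc]
        exact (hint m.castSucc).2
      · have g2 : (i0.castSucc).succAbove m.succ = m.succ.succ :=
          Fin.succAbove_of_le_castSucc _ _ (by rw [Fin.le_def]; simp; omega)
        rw [g2]
        calc α m.castSucc ≤ α i0 := hle _ _ (by simp; omega)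
          _ ≤ β i0.succ := (hint i0).2
          _ = β m.succ.succ := by congr 1; ext; simp; omega
    · have g1 : (i0.succ).succAbove m.castSucc = m.castSucc.castSucc :=
        Fin.succAbove_of_castSucc_lt _ _ (by rw [Fin.lt_def]; simp; omega)
      have g2 : (i0.succ).succAbove m.succ = m.succ.castSucc :=
        Fin.succAbove_of_castSucc_lt _ _ (by rw [Fin.lt_def]; simp; omega)
      refine ⟨g1 ▸ (hint m.castSucc).1, ?_⟩
      rw [g2, ← Fin.succ_castSucc]
      exact (hint m.castSucc).2
  · have ha : i0.succAbove m = m.succ :=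
      Fin.succAbove_of_le_castSucc _ _ (by rw [Fin.le_def]; simp; omega)
    rw [ha]
    rcases hp with rfl | rfl
    · have g1 : (i0.castSucc).succAbove m.castSucc = m.castSucc.succ :=
        Fin.succAbove_of_le_castSucc _ _ (by rw [Fin.le_def]; simp; omega)
      have g2 : (i0.castSucc).succAbove m.succ = m.succ.succ :=
        Fin.succAbove_of_le_castSucc _ _ (by rw [Fin.le_def]; simp; omega)
      constructor
      · rw [g1, Fin.succ_castSucc]
        exact (hint m.succ).1
      · rw [g2]
        exact (hint m.succ).2
    · have g2 : (i0.succ).succAbove m.succ = m.succ.succ :=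
        Fin.succAbove_of_le_castSucc _ _ (by rw [Fin.le_def]; simp; omega)
      refine ⟨?_, g2 ▸ (hint m.succ).2⟩
      by_cases hm1 : (m:ℕ) < (i0:ℕ)+1
      · have g1 : (i0.succ).succAbove m.castSucc = m.castSucc.castSucc :=
          Fin.succAbove_of_castSucc_lt _ _ (by rw [Fin.lt_def]; simp; omega)
        rw [g1]
        calc β m.castSucc.castSucc = β i0.castSucc := by congr 1; ext; simp; omega
          _ ≤ α i0 := (hint i0).1
          _ ≤ α m.succ := hle _ _ (by simp; omega)
      · have g1 : (i0.succ).succAbove m.castSucc = m.castSucc.succ :=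
          Fin.succAbove_of_le_castSucc _ _ (by rw [Fin.le_def]; simp; omega)
        rw [g1, Fin.succ_castSucc]
        exact (hint m.succ).1

lemma core (n : ℕ) : ∀ (k : ℕ), 0 < k → ∀ (c : Fin k → ℝ), (∀ j, 0 < c j) →
    ∀ (β : Fin k → Fin (n+1) → ℝ), (∀ j, Monotone (β j)) →
    ∀ (α : Fin n → ℝ), Monotone α →
    (∀ j (i : Fin n), β j i.castSucc ≤ α i ∧ α i ≤ β j i.succ) →
    (∑ j, C (c j) * ∏ l, (X - C (β j l))).roots.card = n + 1 := by
  induction n with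
  | zero =>
    intro k hk c hc β hβ α hα hint
    obtain ⟨hdeg, hlc, hpos⟩ := F_natDegree hk c hc β
    apply strict_case 0 _ hdeg (by rw [hlc]; exact hpos) α hα
    intro i; exact i.elim0
  | succ n ih =>
    intro k hk c hc β hβ α hα hint
    set F := ∑ j, C (c j) * ∏ l, (X - C (β j l)) with hF
    obtain ⟨hdeg, hlc, hpos⟩ := F_natDegree hk c hc β
    have hFsign : ∀ i : Fin (n+1), 0 ≤ (-1)^(n+1-(i:ℕ)) * F.eval (α i) := by
      intro i
      rw [hF, eval_finset_sum, Finset.mul_sum]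
      apply Finset.sum_nonneg
      intro j _
      exact sign_eval (n+1) (c j) (hc j) (β j) (hβ j) i (α i) (hint j i).1 (hint j i).2
    by_cases hzero : ∀ i, F.eval (α i) ≠ 0
    · apply strict_case (n+1) F hdeg (by rw [hlc]; exact hpos) α hα
      intro i
      refine (hFsign i).lt_of_ne' ?_
      exact mul_ne_zero (by positivity) (hzero i)
    · push_neg at hzero
      obtain ⟨i0, hi0⟩ := hzero
      -- each summand vanishes at α i0
      have hterm : ∀ j, (C (c j) * ∏ l, (X - C (β j l))).eval (α i0) = 0 := by
        have hsum : ∑ j, (-1:ℝ)^(n+1-(i0:ℕ)) * (C (c j) * ∏ l, (X - C (β j l))).eval (α i0)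
            = 0 := by
          rw [← Finset.mul_sum, ← eval_finset_sum, ← hF, hi0, mul_zero]
        intro j
        have := (Finset.sum_eq_zero_iff_of_nonneg (fun j _ =>
          sign_eval (n+1) (c j) (hc j) (β j) (hβ j) i0 (α i0) (hint j i0).1 (hint j i0).2)).1
          hsum j (Finset.mem_univ j)
        have hne : ((-1:ℝ))^(n+1-(i0:ℕ)) ≠ 0 := by positivity
        exact (mul_eq_zero.1 this).resolve_left hne
      have hporb : ∀ j, β j i0.castSucc = α i0 ∨ β j i0.succ = α i0 := by
        intro j
        have h := hterm j
        rw [eval_mul, eval_C, eval_prod] at h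
        simp only [eval_sub, eval_X, eval_C] at h
        have h2 : ∏ l, (α i0 - β j l) = 0 := by
          rcases mul_eq_zero.1 h with h' | h'
          · exact absurd h' (hc j).ne'
          · exact h'
        rw [Finset.prod_eq_zero_iff] at h2
        obtain ⟨l, _, hl⟩ := h2
        have hl' : β j l = α i0 := by linarith
        by_cases hcase : (l:ℕ) ≤ (i0:ℕ)
        · left
          refine le_antisymm (hint j i0).1 ?_
          rw [← hl']
          exact hβ j (show l ≤ i0.castSucc by rw [Fin.le_def]; simpa using hcase)
        · right
          refine le_antisymm ?_ (hint j i0).2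
          rw [← hl']
          exact hβ j (show i0.succ ≤ l by rw [Fin.le_def]; simp; omega)
      set p : Fin k → Fin (n+2) := fun j =>
        if β j i0.castSucc = α i0 then i0.castSucc else i0.succ with hpdef
      have hp : ∀ j, p j = i0.castSucc ∨ p j = i0.succ := by
        intro j; rw [hpdef]; dsimp only; split <;> simp
      have hpv : ∀ j, β j (p j) = α i0 := by
        intro j; rw [hpdef]; dsimp only; split
        · assumption
        · exact (hporb j).resolve_left (by assumption)
      set β' : Fin k → Fin (n+1) → ℝ := fun j m => β j ((p j).succAbove m) with hβ'def
      set α' : Fin n → ℝ := fun m => α (i0.succAbove m) with hα'def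
      have hβ' : ∀ j, Monotone (β' j) := fun j =>
        (hβ j).comp (Fin.strictMono_succAbove (p j)).monotone
      have hα' : Monotone α' := hα.comp (Fin.strictMono_succAbove i0).monotone
      have hint' : ∀ j (m : Fin n), β' j m.castSucc ≤ α' m ∧ α' m ≤ β' j m.succ := by
        intro j m
        exact removal n (β j) (hβ j) α hα (hint j) i0 (p j) (hp j) (hpv j) m
      have hH := ih k hk c hc β' hβ' α' hα' hint'
      set H := ∑ j, C (c j) * ∏ m, (X - C (β' j m)) with hHdef
      have hfact : F = (X - C (α i0)) * H := by
        rw [hF, hHdef, Finset.mul_sum]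
        apply Finset.sum_congr rfl
        intro j _
        rw [Fin.prod_univ_succAbove (fun l => X - C (β j l)) (p j), hpv j]
        ring
      have hHne : H ≠ 0 := by
        intro h; rw [h] at hH; simp at hH
      rw [hfact, roots_mul (mul_ne_zero (X_sub_C_ne_zero (α i0)) hHne), roots_X_sub_C,
        Multiset.card_add, Multiset.card_singleton, hH]
      omega

lemma mono_eq {m : ℕ} (a b : Fin m → ℝ) (ha : Monotone a) (hb : Monotone b)
    (h : Multiset.map a Finset.univ.val = Multiset.map b Finset.univ.val) : a = b := by
  rw [Fin.univ_val_map, Fin.univ_val_map, Multiset.coe_eq_coe] at h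
  exact List.ofFn_injective (List.Perm.eq_of_sortedLE ha.sortedLE_ofFn hb.sortedLE_ofFn h)

end Aux

/-- If real-rooted degree-`n` polynomials with positive leading coefficients have a common
interlacing, then their sum is real-rooted. -/
theorem commonInterlacing_sum_realRooted
    {k n : ℕ} (f : Fin k → Polynomial ℝ)
    (hf : ∀ j, RealRooted (f j) ∧ (f j).natDegree = n ∧ 0 < (f j).leadingCoeff)
    (hci : ∃ g, ∀ j, Interlaces g (f j)) :
    RealRooted (∑ j, f j) := by
  rcases Nat.eq_zero_or_pos k with hk0 | hk
  · subst hk0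
    show RealRooted 0
    simp [RealRooted]
  · obtain ⟨g, hg⟩ := hci
    have hcard : ∀ j, (f j).roots.card = n := fun j => (hf j).1.trans (hf j).2.1
    obtain ⟨m, α0, β0, hα0, hβ0, hgr, hfr, hint0⟩ := hg ⟨0, hk⟩
    have hn : n = m + 1 := by
      have h1 := hcard ⟨0, hk⟩
      rw [hfr, Multiset.card_map] at h1
      simp at h1
      omega
    subst hn
    have key : ∀ j, ∃ βj : Fin (m+1) → ℝ, Monotone βj ∧
        (f j).roots = Finset.univ.val.map βj ∧
        ∀ i : Fin m, βj i.castSucc ≤ α0 i ∧ α0 i ≤ βj i.succ := by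
      intro j
      obtain ⟨mj, αj, βj, hαj, hβj, hgrj, hfrj, hintj⟩ := hg j
      have hmj : mj = m := by
        have h1 : (Finset.univ.val.map αj).card = (Finset.univ.val.map α0).card := by
          rw [← hgrj, ← hgr]
        rw [Multiset.card_map, Multiset.card_map] at h1
        simpa using h1
      subst hmj
      have hαeq : αj = α0 := mono_eq αj α0 hαj hα0 (by rw [← hgrj, ← hgr])
      exact ⟨βj, hβj, hfrj, fun i => hαeq ▸ hintj i⟩
    choose β hβmono hβroots hβint using key
    set c : Fin k → ℝ := fun j => (f j).leadingCoeff with hcdef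
    have hcpos : ∀ j, 0 < c j := fun j => (hf j).2.2
    have hrepr : ∀ j, f j = C (c j) * ∏ l, (X - C (β j l)) := by
      intro j
      have h := C_leadingCoeff_mul_prod_multiset_X_sub_C (p := f j) ((hf j).1)
      rw [← h]
      congr 1
      rw [hβroots j, Multiset.map_map]
      rfl
    have hsum : ∑ j, f j = ∑ j, C (c j) * ∏ l, (X - C (β j l)) :=
      Finset.sum_congr rfl (fun j _ => hrepr j)
    rw [RealRooted, hsum]
    rw [core (m) k hk c hcpos β hβmono α0 hα0 (fun j i => hβint j i),
      (F_natDegree hk c hcpos β).1]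
end
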